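/- arXiv:1512.06899 — 6 statements merged into one kernel-verified Lean document; each statement's English description precedes it below -/
import Mathlib

section
/- Let T ∈ [0,∞), let (Ω, F, P, (F_t)_{t∈[0,T]}) be a stochastic basis, let (E, d_E) be a complete and separable metric space, and let Y : [0,T] × Ω → E be an (F_t)_{t∈[0,T]}-adapted stochastic process such that for every t ∈ (0,∞) ∩ (−∞,T] it holds that limsup_{[0,T]∋s→t} E[min{1, d_E(Y_s, Y_t)}] = 0. Then there exists an (F_t)_{t∈[0,T]}-predictable stochastic process X : [0,T] × Ω → E (i.e., X is measurable from the predictable σ-algebra Pred((F_t)_{t∈[0,T]}) to the Borel σ-algebra of E) such that for all t ∈ [0,T] it holds that P(X_t = Y_t) = 1. -/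
/-!
Approximate `Y` by the step processes `Xⁿ_t = Y_{kcₙ}` for `t ∈ (kcₙ, (k+1)cₙ]`, which are
predictable because `Y` is adapted. The function `(s, t) ↦ E[min{1, d(Y_s, Y_t)}]` is a
pseudometric on `[0, T]` that is continuous at every `t > 0`, hence uniformly continuous on
`[1/(n+1), T]`; choosing the mesh `cₙ` accordingly makes `∑ₙ E[min{1, d(Xⁿ_t, Y_t)}]` finite for
every `t`, so `Xⁿ_t → Y_t` almost surely. Since `E` is Polish, the pointwise limit of `Xⁿ` (where it
exists) is predictable, and it is the required modification.
-/

open MeasureTheory Filter Set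

noncomputable section

/-- The predictable σ-algebra `Pred((𝓕_t)_{t ∈ [0,T]})` on `[0,T] × Ω` associated to a
filtration `𝓕`, generated by the sets `(s,t] × A` with `0 ≤ s < t ≤ T`, `A ∈ 𝓕 s`,
together with the sets `{0} × A` with `A ∈ 𝓕 0`. -/
def Pred {Ω : Type*} (𝓕 : ℝ → MeasurableSpace Ω) (T : ℝ) :
    MeasurableSpace (Set.Icc (0:ℝ) T × Ω) :=
  MeasurableSpace.generateFrom
    ({S : Set (Set.Icc (0:ℝ) T × Ω) | ∃ s t : ℝ, ∃ A : Set Ω,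
        0 ≤ s ∧ s < t ∧ t ≤ T ∧ MeasurableSet[𝓕 s] A ∧
        S = {p : Set.Icc (0:ℝ) T × Ω | s < (p.1 : ℝ) ∧ (p.1 : ℝ) ≤ t ∧ p.2 ∈ A}} ∪
     {S : Set (Set.Icc (0:ℝ) T × Ω) | ∃ A : Set Ω, MeasurableSet[𝓕 0] A ∧
        S = {p : Set.Icc (0:ℝ) T × Ω | (p.1 : ℝ) = 0 ∧ p.2 ∈ A}})

open scoped Topology ENNReal

section TruncatedDistance

variable {Ω E : Type*} [MeasurableSpace Ω] {μ : Measure Ω} [PseudoMetricSpace E]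

lemma min_one_dist_triangle (x y z : E) :
    min 1 (dist x z) ≤ min 1 (dist x y) + min 1 (dist y z) := by
  have := dist_triangle x y z
  have := dist_nonneg (x := x) (y := y)
  have := dist_nonneg (x := y) (y := z)
  simp only [min_def]
  split_ifs <;> linarith

lemma norm_min_one_dist_le_one (x y : E) : ‖min 1 (dist x y)‖ ≤ 1 := by
  rw [Real.norm_of_nonneg (le_min zero_le_one dist_nonneg)]
  exact min_le_left _ _

lemma integrable_min_one_dist [IsFiniteMeasure μ] {f g : Ω → E}
    (h : AEStronglyMeasurable (fun ω => dist (f ω) (g ω)) μ) :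
    Integrable (fun ω => min 1 (dist (f ω) (g ω))) μ :=
  .of_bound (by fun_prop) 1 <| .of_forall fun _ => norm_min_one_dist_le_one _ _

lemma integral_min_one_dist_nonneg {f g : Ω → E} :
    0 ≤ ∫ ω, min 1 (dist (f ω) (g ω)) ∂μ :=
  integral_nonneg fun _ => le_min zero_le_one dist_nonneg

lemma integral_min_one_dist_le_one [IsProbabilityMeasure μ] {f g : Ω → E} :
    ∫ ω, min 1 (dist (f ω) (g ω)) ∂μ ≤ 1 := by
  simpa using (le_abs_self _).trans (norm_integral_le_of_norm_le_const (μ := μ)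
    (.of_forall fun ω => norm_min_one_dist_le_one (f ω) (g ω)))

lemma integral_min_one_dist_triangle [IsFiniteMeasure μ] {f g h : Ω → E}
    (hf : AEStronglyMeasurable f μ) (hg : AEStronglyMeasurable g μ)
    (hh : AEStronglyMeasurable h μ) :
    ∫ ω, min 1 (dist (f ω) (h ω)) ∂μ ≤
      ∫ ω, min 1 (dist (f ω) (g ω)) ∂μ + ∫ ω, min 1 (dist (g ω) (h ω)) ∂μ := by
  have hd : ∀ {u v : Ω → E}, AEStronglyMeasurable u μ → AEStronglyMeasurable v μ →
      Integrable (fun ω => min 1 (dist (u ω) (v ω))) μ := fun hu hv =>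
    integrable_min_one_dist (continuous_dist.comp_aestronglyMeasurable (hu.prodMk hv))
  rw [← integral_add (hd hf hg) (hd hg hh)]
  exact integral_mono (hd hf hh) ((hd hf hg).add (hd hg hh)) fun ω => min_one_dist_triangle _ _ _

lemma ae_tendsto_zero_of_tsum_lintegral_ne_top {f : ℕ → Ω → ℝ≥0∞}
    (hf : ∀ n, AEMeasurable (f n) μ) (h : ∑' n, ∫⁻ ω, f n ω ∂μ ≠ ∞) :
    ∀ᵐ ω ∂μ, Tendsto (fun n => f n ω) atTop (𝓝 0) := by
  rw [← lintegral_tsum hf] at h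
  filter_upwards [ae_lt_top' (AEMeasurable.tsum hf) h] with ω hω
  exact ENNReal.tendsto_atTop_zero_of_tsum_ne_top hω.ne

lemma ae_tendsto_of_summable_integral_min_one_dist [IsFiniteMeasure μ] {f : ℕ → Ω → E}
    {g : Ω → E} (hfg : ∀ n, AEStronglyMeasurable (fun ω => dist (f n ω) (g ω)) μ)
    (h : Summable fun n => ∫ ω, min 1 (dist (f n ω) (g ω)) ∂μ) :
    ∀ᵐ ω ∂μ, Tendsto (fun n => f n ω) atTop (𝓝 (g ω)) := by
  have hlint : ∑' n, ∫⁻ ω, ENNReal.ofReal (min 1 (dist (f n ω) (g ω))) ∂μ ≠ ∞ := by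
    simp_rw [← ofReal_integral_eq_lintegral_ofReal (integrable_min_one_dist (hfg _))
      (.of_forall fun _ => le_min zero_le_one dist_nonneg)]
    rw [← ENNReal.ofReal_tsum_of_nonneg (fun _ => integral_min_one_dist_nonneg) h]
    exact ENNReal.ofReal_ne_top
  filter_upwards [ae_tendsto_zero_of_tsum_lintegral_ne_top
    (fun n => ENNReal.measurable_ofReal.comp_aemeasurable
      (aemeasurable_const.min (hfg n).aemeasurable)) hlint] with ω hω
  have hmin : Tendsto (fun n => min 1 (dist (f n ω) (g ω))) atTop (𝓝 0) := by
    have := (ENNReal.tendsto_toReal ENNReal.zero_ne_top).comp hω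
    simpa only [Function.comp_def, ENNReal.toReal_ofReal (le_min zero_le_one dist_nonneg),
      ENNReal.toReal_zero] using this
  rw [tendsto_iff_dist_tendsto_zero]
  refine hmin.congr' ((hmin.eventually (gt_mem_nhds one_pos)).mono fun n hn => ?_)
  exact min_eq_right ((min_lt_iff.1 hn).resolve_left (lt_irrefl 1)).le

end TruncatedDistance

lemma tendsto_zero_of_limsup_eq_zero {ι : Type*} {l : Filter ι} [l.NeBot] {u : ι → ℝ}
    (h_nonneg : ∀ i, 0 ≤ u i) (h_bdd : IsBoundedUnder (· ≤ ·) l u) (h : limsup u l = 0) :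
    Tendsto u l (𝓝 0) :=
  tendsto_of_le_liminf_of_limsup_le
    (le_liminf_of_le h_bdd.isCoboundedUnder_ge (.of_forall h_nonneg)) h.le h_bdd
    (isBoundedUnder_of ⟨0, h_nonneg⟩)

theorem IsCompact.exists_pos_forall_lt_of_tendsto_zero {X : Type*} [PseudoMetricSpace X]
    {K : Set X} (hK : IsCompact K) {f : X → X → ℝ} (h_symm : ∀ s t, f s t = f t s)
    (h_tri : ∀ s t u, f s t ≤ f s u + f u t) (hf : ∀ u ∈ K, Tendsto (f · u) (𝓝 u) (𝓝 0))
    {ε : ℝ} (hε : 0 < ε) : ∃ δ > 0, ∀ s ∈ K, ∀ t, dist s t < δ → f s t < ε := by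
  have hr : ∀ u : K, ∃ r > 0, ∀ s : X, dist s u.1 < r → f s u.1 < ε / 2 := fun u =>
    Metric.eventually_nhds_iff.1 ((hf u.1 u.2).eventually (gt_mem_nhds (half_pos hε)))
  choose r hr_pos hr using hr
  obtain ⟨δ, hδ, hball⟩ := lebesgue_number_lemma_of_metric hK
    (fun u : K => Metric.isOpen_ball (x := u.1) (ε := r u))
    (fun s hs => mem_iUnion.2 ⟨⟨s, hs⟩, Metric.mem_ball_self (hr_pos _)⟩)
  refine ⟨δ, hδ, fun s hs t hst => ?_⟩
  obtain ⟨u, hu⟩ := hball s hs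
  have hsu := hr u s (hu (Metric.mem_ball_self hδ))
  have htu := hr u t (hu (by rwa [Metric.mem_ball, dist_comm]))
  calc f s t ≤ f s u + f t u := h_symm u t ▸ h_tri s t u
    _ < ε := by linarith

/-- `gridIndex c t * c` is the last point of the grid `c ℕ` strictly before `t`, and `0` when
`t ≤ 0` (truncated subtraction). -/
def gridIndex (c t : ℝ) : ℕ := ⌈t / c⌉₊ - 1

@[simp] lemma gridIndex_zero (c : ℝ) : gridIndex c 0 = 0 := by simp [gridIndex]

lemma gridIndex_eq_iff {c t : ℝ} (hc : 0 < c) (ht : 0 < t) {k : ℕ} :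
    gridIndex c t = k ↔ k * c < t ∧ t ≤ (k + 1) * c := by
  have hceil : 1 ≤ ⌈t / c⌉₊ := Nat.one_le_iff_ne_zero.2 (Nat.ceil_pos.2 (div_pos ht hc)).ne'
  rw [gridIndex, Nat.sub_eq_iff_eq_add hceil, Nat.ceil_eq_iff k.succ_ne_zero, lt_div_iff₀ hc,
    div_le_iff₀ hc]
  push_cast
  simp

lemma gridIndex_mul_mem_Icc {c t : ℝ} (hc : 0 < c) (ht : 0 ≤ t) :
    (gridIndex c t * c : ℝ) ∈ Icc (t - c) t := by
  rcases ht.eq_or_lt with rfl | ht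
  · simp [hc.le]
  · obtain ⟨h_lt, h_le⟩ := (gridIndex_eq_iff hc ht).1 rfl
    constructor <;> linarith

def gridPoint {T : ℝ} (hT : 0 ≤ T) (c : ℝ) (t : Icc (0:ℝ) T) : Icc (0:ℝ) T :=
  projIcc 0 T hT (gridIndex c t * c)

lemma gridPoint_of_eq_zero {T c : ℝ} (hT : 0 ≤ T) {t : Icc (0:ℝ) T} (ht : (t : ℝ) = 0) :
    gridPoint hT c t = t := by
  ext
  simp [gridPoint, ht]

lemma dist_gridPoint_le {T c : ℝ} (hT : 0 ≤ T) (hc : 0 < c) (t : Icc (0:ℝ) T) :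
    dist (gridPoint hT c t) t ≤ c := by
  obtain ⟨h_lo, h_hi⟩ := gridIndex_mul_mem_Icc hc t.2.1
  rw [gridPoint, projIcc_of_mem hT ⟨by positivity, h_hi.trans t.2.2⟩, Subtype.dist_eq,
    Real.dist_eq, abs_sub_comm, abs_of_nonneg (sub_nonneg.2 h_hi)]
  linarith

section Predictable

variable {Ω : Type*} {𝓕 : ℝ → MeasurableSpace Ω} {T : ℝ}

lemma measurableSet_pred_Ioc {s t : ℝ} (hs : 0 ≤ s) {A : Set Ω} (hA : MeasurableSet[𝓕 s] A) :
    MeasurableSet[Pred 𝓕 T] {p : Icc (0:ℝ) T × Ω | s < p.1 ∧ (p.1 : ℝ) ≤ t ∧ p.2 ∈ A} := by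
  by_cases hst : s < min t T
  · have h_gen : MeasurableSet[Pred 𝓕 T]
        {p : Icc (0:ℝ) T × Ω | s < p.1 ∧ (p.1 : ℝ) ≤ min t T ∧ p.2 ∈ A} :=
      MeasurableSpace.measurableSet_generateFrom
        (Or.inl ⟨s, min t T, A, hs, hst, min_le_right _ _, hA, rfl⟩)
    convert h_gen using 1
    ext p
    simp [p.1.2.2]
  · convert MeasurableSet.empty
    refine eq_empty_iff_forall_notMem.2 fun p ⟨h_lt, h_le, _⟩ => hst ?_
    exact lt_min (h_lt.trans_le h_le) (h_lt.trans_le p.1.2.2)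

lemma measurableSet_pred_zero {A : Set Ω} (hA : MeasurableSet[𝓕 0] A) :
    MeasurableSet[Pred 𝓕 T] {p : Icc (0:ℝ) T × Ω | (p.1 : ℝ) = 0 ∧ p.2 ∈ A} :=
  MeasurableSpace.measurableSet_generateFrom (Or.inr ⟨A, hA, rfl⟩)

lemma measurableSet_pred_gridIndex_eq {c : ℝ} (hc : 0 < c) {k : ℕ} {A : Set Ω}
    (hA : MeasurableSet[𝓕 (k * c)] A) :
    MeasurableSet[Pred 𝓕 T] {p : Icc (0:ℝ) T × Ω | gridIndex c p.1 = k ∧ p.2 ∈ A} := by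
  have h_split : {p : Icc (0:ℝ) T × Ω | gridIndex c p.1 = k ∧ p.2 ∈ A} =
      {p | k * c < p.1 ∧ (p.1 : ℝ) ≤ (k + 1) * c ∧ p.2 ∈ A} ∪
        {p | (p.1 : ℝ) = 0 ∧ p.2 ∈ {ω | k = 0 ∧ ω ∈ A}} := by
    ext p
    rcases p.1.2.1.eq_or_lt with h0 | hpos
    · have : ¬ (k * c < (0 : ℝ)) := not_lt.2 (by positivity)
      simp [← h0, this, eq_comm]
    · simp [gridIndex_eq_iff hc hpos, hpos.ne', and_assoc]
  rw [h_split]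
  refine (measurableSet_pred_Ioc (by positivity) hA).union (measurableSet_pred_zero ?_)
  rcases eq_or_ne k 0 with rfl | hk
  · simp only [true_and, ofPred_mem_eq]
    rwa [Nat.cast_zero, zero_mul] at hA
  · simp [hk]

lemma measurable_pred_gridStep {E : Type*} [MeasurableSpace E] {c : ℝ} (hc : 0 < c)
    {Z : ℕ → Ω → E} (hZ : ∀ k : ℕ, Measurable[𝓕 (k * c)] (Z k)) :
    Measurable[Pred 𝓕 T] fun p : Icc (0:ℝ) T × Ω => Z (gridIndex c p.1) p.2 := by
  intro B hB
  have : (fun p : Icc (0:ℝ) T × Ω => Z (gridIndex c p.1) p.2) ⁻¹' B =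
      ⋃ k, {p | gridIndex c p.1 = k ∧ p.2 ∈ Z k ⁻¹' B} := by
    ext p
    simp
  rw [this]
  exact .iUnion fun k => measurableSet_pred_gridIndex_eq hc (hZ k hB)

lemma measurable_pred_gridPoint {E : Type*} [MeasurableSpace E]
    (h_mono : ∀ s t : ℝ, s ≤ t → 𝓕 s ≤ 𝓕 t) (hT : 0 ≤ T) {c : ℝ} (hc : 0 < c)
    {Y : Icc (0:ℝ) T → Ω → E} (hY : ∀ t : Icc (0:ℝ) T, Measurable[𝓕 t] (Y t)) :
    Measurable[Pred 𝓕 T] fun p : Icc (0:ℝ) T × Ω => Y (gridPoint hT c p.1) p.2 :=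
  measurable_pred_gridStep hc fun k => (hY _).mono (h_mono _ _ (by
    rw [coe_projIcc]
    exact max_le (by positivity) (min_le_right _ _))) le_rfl

end Predictable

lemma exists_mesh_summable {T : ℝ} (hT : 0 ≤ T) {ρ : Icc (0:ℝ) T → Icc (0:ℝ) T → ℝ}
    (h_nonneg : ∀ s t, 0 ≤ ρ s t) (h_self : ∀ t, ρ t t = 0) (h_symm : ∀ s t, ρ s t = ρ t s)
    (h_tri : ∀ s t u, ρ s t ≤ ρ s u + ρ u t)
    (h_cont : ∀ t : Icc (0:ℝ) T, 0 < (t : ℝ) → Tendsto (ρ · t) (𝓝 t) (𝓝 0)) :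
    ∃ c : ℕ → ℝ, (∀ n, 0 < c n) ∧ ∀ t, Summable fun n => ρ (gridPoint hT (c n) t) t := by
  have hK : ∀ n : ℕ, IsCompact {s : Icc (0:ℝ) T | 1 / (n + 1) ≤ (s : ℝ)} := fun n =>
    (isClosed_le continuous_const continuous_subtype_val).isCompact
  have h_unif : ∀ n : ℕ, ∃ δ > 0, ∀ s : Icc (0:ℝ) T, 1 / (n + 1) ≤ (s : ℝ) →
      ∀ t, dist s t < δ → ρ s t < (1 / 2) ^ n := fun n =>
    (hK n).exists_pos_forall_lt_of_tendsto_zero h_symm h_tri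
      (fun u hu => h_cont u (Nat.one_div_pos_of_nat.trans_le hu)) (by positivity)
  choose δ hδ_pos hδ using h_unif
  refine ⟨fun n => δ n / 2, fun n => half_pos (hδ_pos n), fun t => ?_⟩
  refine summable_geometric_two.of_norm_bounded_eventually_nat ?_
  rcases t.2.1.eq_or_lt with h0 | hpos
  · refine .of_forall fun n => ?_
    rw [gridPoint_of_eq_zero hT h0.symm, h_self, norm_zero]
    positivity
  · filter_upwards [tendsto_one_div_add_atTop_nhds_zero_nat.eventually (ge_mem_nhds hpos)]
      with n hn
    rw [Real.norm_of_nonneg (h_nonneg _ _), h_symm]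
    refine (hδ n t hn _ ?_).le
    rw [dist_comm]
    exact (dist_gridPoint_le hT (half_pos (hδ_pos n)) t).trans_lt (half_lt_self (hδ_pos n))

theorem exists_predictable_modification_general
    {Ω : Type*} [m : MeasurableSpace Ω] (P : Measure Ω) [IsProbabilityMeasure P]
    (T : ℝ) (hT : 0 ≤ T)
    (𝓕 : ℝ → MeasurableSpace Ω)
    (h_le : ∀ t : ℝ, 𝓕 t ≤ m)
    (h_mono : ∀ s t : ℝ, s ≤ t → 𝓕 s ≤ 𝓕 t)
    {E : Type*} [MetricSpace E] [CompleteSpace E] [TopologicalSpace.SeparableSpace E]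
    [MeasurableSpace E] [BorelSpace E]
    (Y : Set.Icc (0:ℝ) T → Ω → E)
    (hY_adapted : ∀ t : Set.Icc (0:ℝ) T, Measurable[𝓕 t] (Y t))
    (hY_cont : ∀ t : Set.Icc (0:ℝ) T, 0 < (t : ℝ) →
      Filter.limsup
        (fun s : Set.Icc (0:ℝ) T => ∫ ω, min 1 (dist (Y s ω) (Y t ω)) ∂P)
        (nhds t) = 0) :
    ∃ X : Set.Icc (0:ℝ) T → Ω → E,
      Measurable[Pred 𝓕 T] (fun p : Set.Icc (0:ℝ) T × Ω => X p.1 p.2) ∧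
      ∀ t : Set.Icc (0:ℝ) T, P {ω | X t ω = Y t ω} = 1 := by
  have := nonempty_of_isProbabilityMeasure P
  have : Nonempty E := ⟨Y ⟨0, le_rfl, hT⟩ (Classical.arbitrary Ω)⟩
  have hY : ∀ t, Measurable (Y t) := fun t => (hY_adapted t).mono (h_le t) le_rfl
  obtain ⟨c, hc_pos, hc_summable⟩ := exists_mesh_summable hT
    (ρ := fun s t => ∫ ω, min 1 (dist (Y s ω) (Y t ω)) ∂P)
    (fun _ _ => integral_min_one_dist_nonneg) (fun _ => by simp)
    (fun _ _ => by simp only [dist_comm])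
    (fun s t u => integral_min_one_dist_triangle (hY s).aestronglyMeasurable
      (hY u).aestronglyMeasurable (hY t).aestronglyMeasurable)
    (fun t ht => tendsto_zero_of_limsup_eq_zero (fun _ => integral_min_one_dist_nonneg)
      (isBoundedUnder_of ⟨1, fun _ => integral_min_one_dist_le_one⟩) (hY_cont t ht))
  let Xn : ℕ → Icc (0:ℝ) T × Ω → E := fun n p => Y (gridPoint hT (c n) p.1) p.2
  have hXn : ∀ n, StronglyMeasurable[Pred 𝓕 T] (Xn n) := fun n =>
    (measurable_pred_gridPoint h_mono hT (hc_pos n) hY_adapted).stronglyMeasurable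
  have hX : Measurable[Pred 𝓕 T] fun p => limUnder atTop (Xn · p) := by
    let := Pred 𝓕 T
    exact (StronglyMeasurable.limUnder hXn).measurable
  refine ⟨fun t ω => limUnder atTop (Xn · (t, ω)), hX, fun t => ?_⟩
  have h_conv := ae_tendsto_of_summable_integral_min_one_dist
    (fun n => ((hY _).dist (hY t)).aestronglyMeasurable) (hc_summable t)
  exact (measure_congr (ae_eq_univ.2 (ae_iff.1 (h_conv.mono fun ω hω => hω.limUnder_eq)))).trans
    measure_univ

/-- **Existence of predictable modifications.**  Let `T ∈ [0,∞)`, let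
`(Ω, F, P, (𝓕_t)_{t∈[0,T]})` be a stochastic basis (a probability space with a normal
filtration), let `(E, d)` be a complete separable metric space, and let
`Y : [0,T] × Ω → E` be an adapted process such that for every `t ∈ (0,T]` it holds that
`limsup_{[0,T] ∋ s → t} E[min{1, d(Y_s, Y_t)}] = 0`.  Then there exists a predictable
process `X : [0,T] × Ω → E` with `P(X_t = Y_t) = 1` for all `t ∈ [0,T]`. -/
theorem exists_predictable_modification
    {Ω : Type*} [m : MeasurableSpace Ω] (P : Measure Ω) [IsProbabilityMeasure P]
    (T : ℝ) (hT : 0 ≤ T)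
    (𝓕 : ℝ → MeasurableSpace Ω)
    (h_le : ∀ t : ℝ, 𝓕 t ≤ m)
    (h_mono : ∀ s t : ℝ, s ≤ t → 𝓕 s ≤ 𝓕 t)
    (h_right : ∀ t ∈ Set.Ico (0:ℝ) T, 𝓕 t = ⨅ s ∈ Set.Ioc t T, 𝓕 s)
    (h_null : ∀ A : Set Ω, P A = 0 → MeasurableSet[𝓕 0] A)
    {E : Type*} [MetricSpace E] [CompleteSpace E] [TopologicalSpace.SeparableSpace E]
    [MeasurableSpace E] [BorelSpace E]
    (Y : Set.Icc (0:ℝ) T → Ω → E)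
    (hY_adapted : ∀ t : Set.Icc (0:ℝ) T, Measurable[𝓕 t] (Y t))
    (hY_cont : ∀ t : Set.Icc (0:ℝ) T, 0 < (t : ℝ) →
      Filter.limsup
        (fun s : Set.Icc (0:ℝ) T => ∫ ω, min 1 (dist (Y s ω) (Y t ω)) ∂P)
        (nhds t) = 0) :
    ∃ X : Set.Icc (0:ℝ) T → Ω → E,
      Measurable[Pred 𝓕 T] (fun p : Set.Icc (0:ℝ) T × Ω => X p.1 p.2) ∧
      ∀ t : Set.Icc (0:ℝ) T, P {ω | X t ω = Y t ω} = 1 :=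
  exists_predictable_modification_general (m := m) P T hT 𝓕 h_le h_mono Y hY_adapted hY_cont
end
end

section
/- Let (V_0, ‖·‖_{V_0}) and (V_1, ‖·‖_{V_1}) be separable ℝ-Banach spaces with V_1 ⊆ V_0 continuously and densely, let T ∈ (0,∞), λ ∈ ℝ, p ∈ [1,∞), let (Ω, F, P, (F_t)_{t∈[0,T]}) be a filtered probability space, let L be the set of all Pred((F_t)_{t∈[0,T]})/B(V_0)-measurable processes X : [0,T] × Ω → V_0 such that X((0,T] × Ω) ⊆ V_1 and ‖X_0‖_{L^p(P;V_0)} + sup_{t∈(0,T]} t^λ ‖X_t‖_{L^p(P;V_1)} < ∞, and for X ∈ L set |X|_L = ‖X_0‖_{L^p(P;V_0)} + sup_{t∈(0,T]} [ t^λ ‖X_t‖_{L^p(P;V_1)} ]. If X^N ∈ L, N ∈ ℕ, is a sequence with limsup_{N→∞} sup_{n,m∈ℕ∩[N,∞)} |X^n − X^m|_L = 0, then there exists Y ∈ L such that limsup_{N→∞} |X^N − Y|_L = 0. -/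
/-!
The weighted norm dominates, uniformly in `t`, the `Lᵖ` norm of every time slice. Hence a Cauchy
sequence has one subsequence `φ`, chosen independently of `t`, along which the Cauchy modulus
decays like `2⁻ᵏ`; by the Riesz–Fischer argument it converges almost surely at every fixed time.
Its pointwise limit, taken everywhere with `limUnder`, is predictable because pointwise limits of
measurable maps into Polish spaces are measurable; the `V₁`-valued limit is the limit of `g ∘ X`
for a measurable left inverse `g` of `ι`, which exists by Lusin–Souslin. Fatou's lemma bounds
every slice of `X n - Y` by the Cauchy modulus, which gives both the convergence and, through the
triangle inequality, the finiteness of `|Y|_𝓛`.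
-/

open MeasureTheory Filter Set
open scoped ENNReal

noncomputable section

/-- The weighted norm `|X|_𝓛 = ‖X_0‖_{L^p(P;V₀)} + sup_{t∈(0,T]} t^λ ‖X_t‖_{L^p(P;V₁)}`
of a process `U : [0,T] × Ω → V₀` whose restriction to `(0,T] × Ω` takes values in `V₁`
and is there given by the `V₁`-valued process `U₁`. -/
def Lnorm {Ω V₀ V₁ : Type*} [MeasurableSpace Ω]
    [NormedAddCommGroup V₀] [NormedAddCommGroup V₁]
    (P : Measure Ω) (T : ℝ) (hT : 0 ≤ T) (p lam : ℝ)
    (U : Set.Icc (0:ℝ) T → Ω → V₀) (U₁ : Set.Icc (0:ℝ) T → Ω → V₁) : ℝ≥0∞ :=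
  eLpNorm (U ⟨0, Set.left_mem_Icc.mpr hT⟩) (ENNReal.ofReal p) P +
    ⨆ (t : Set.Icc (0:ℝ) T) (_ : 0 < (t : ℝ)),
      ENNReal.ofReal ((t : ℝ) ^ lam) * eLpNorm (U₁ t) (ENNReal.ofReal p) P

open scoped Topology

theorem measurable_limUnder {α E : Type*} {mα : MeasurableSpace α} [TopologicalSpace E]
    [PolishSpace E] [MeasurableSpace E] [BorelSpace E] [Nonempty E] {f : ℕ → α → E}
    (hf : ∀ k, Measurable (f k)) : Measurable fun x => limUnder atTop (f · x) :=
  (StronglyMeasurable.limUnder fun k => (hf k).stronglyMeasurable).measurable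

section Predictable

variable {Ω : Type*} {𝓕 : ℝ → MeasurableSpace Ω} {T : ℝ}

theorem measurableSet_pred_fst_eq_zero :
    MeasurableSet[Pred 𝓕 T] {q : Set.Icc (0:ℝ) T × Ω | (q.1 : ℝ) = 0} :=
  MeasurableSpace.measurableSet_generateFrom <| Or.inr ⟨univ, MeasurableSet.univ, by simp⟩

theorem measurable_prodMk_left_pred {m : MeasurableSpace Ω} (h_le : ∀ t, 𝓕 t ≤ m)
    (t : Set.Icc (0:ℝ) T) : Measurable[m, Pred 𝓕 T] fun ω => (t, ω) := by
  refine measurable_generateFrom ?_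
  rintro S (⟨s, u, A, -, -, -, hA, rfl⟩ | ⟨A, hA, rfl⟩)
  · exact (MeasurableSet.const (s < (t : ℝ))).inter
      ((MeasurableSet.const ((t : ℝ) ≤ u)).inter (h_le s A hA))
  · exact (MeasurableSet.const ((t : ℝ) = 0)).inter (h_le 0 A hA)

theorem exists_pred_limUnder {V₀ V₁ : Type*}
    [TopologicalSpace V₀] [PolishSpace V₀] [MeasurableSpace V₀] [BorelSpace V₀] [Nonempty V₀]
    [TopologicalSpace V₁] [PolishSpace V₁] [MeasurableSpace V₁] [BorelSpace V₁] [Nonempty V₁]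
    {ι : V₁ → V₀} (hι : MeasurableEmbedding ι)
    {X : ℕ → Set.Icc (0:ℝ) T → Ω → V₀} {X₁ : ℕ → Set.Icc (0:ℝ) T → Ω → V₁}
    (hX : ∀ k, Measurable[Pred 𝓕 T] fun q : Set.Icc (0:ℝ) T × Ω => X k q.1 q.2)
    (hX_val : ∀ k (t : Set.Icc (0:ℝ) T), 0 < (t : ℝ) → ∀ ω, X k t ω = ι (X₁ k t ω)) :
    ∃ (Y : Set.Icc (0:ℝ) T → Ω → V₀) (Y₁ : Set.Icc (0:ℝ) T → Ω → V₁),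
      Measurable[Pred 𝓕 T] (fun q : Set.Icc (0:ℝ) T × Ω => Y q.1 q.2) ∧
      (∀ t : Set.Icc (0:ℝ) T, 0 < (t : ℝ) → ∀ ω, Y t ω = ι (Y₁ t ω)) ∧
      (∀ t : Set.Icc (0:ℝ) T, (t : ℝ) = 0 → ∀ ω, (∃ l, Tendsto (X · t ω) atTop (𝓝 l)) →
        Tendsto (X · t ω) atTop (𝓝 (Y t ω))) ∧
      ∀ t : Set.Icc (0:ℝ) T, 0 < (t : ℝ) → ∀ ω, (∃ l, Tendsto (X₁ · t ω) atTop (𝓝 l)) →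
        Tendsto (X₁ · t ω) atTop (𝓝 (Y₁ t ω)) := by
  obtain ⟨g, hg, hgι⟩ : ∃ g : V₀ → V₁, Measurable g ∧ ∀ x, g (ι x) = x :=
    ⟨_, hι.measurable_extend measurable_id measurable_const,
      fun x => hι.injective.extend_apply _ (fun _ => Classical.arbitrary V₁) x⟩
  let Y₁ : Set.Icc (0:ℝ) T → Ω → V₁ := fun t ω => limUnder atTop fun k => g (X k t ω)
  -- `X₁` carries no information at time `0`, so there the limit is taken in `V₀`.
  refine ⟨fun t ω => if (t : ℝ) = 0 then limUnder atTop (X · t ω) else ι (Y₁ t ω), Y₁,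
    ?_, fun t ht ω => if_neg ht.ne', fun t ht ω hω => ?_, fun t ht ω hω => ?_⟩
  · exact Measurable.ite measurableSet_pred_fst_eq_zero (measurable_limUnder hX)
      (hι.measurable.comp (measurable_limUnder fun k => hg.comp (hX k)))
  · simpa only [if_pos ht] using tendsto_nhds_limUnder hω
  · have hgX : (fun k => g (X k t ω)) = (X₁ · t ω) := funext fun k => by rw [hX_val k t ht, hgι]
    simpa only [Y₁, hgX] using tendsto_nhds_limUnder hω

end Predictable

section SliceLp

variable {Ω E : Type*} {m : MeasurableSpace Ω} {μ : Measure Ω} [NormedAddCommGroup E]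
  {q c : ℝ≥0∞} {f : ℕ → Ω → E} {D : ℕ → ℝ≥0∞} {φ : ℕ → ℕ}

theorem ae_exists_tendsto_comp_of_mul_eLpNorm_sub_le [CompleteSpace E] (hq : 1 ≤ q)
    (hc₀ : c ≠ 0) (hc : c ≠ ∞) (hf : ∀ n, AEStronglyMeasurable (f n) μ)
    (hfD : ∀ N n k, N ≤ n → N ≤ k → c * eLpNorm (fun ω => f n ω - f k ω) q μ ≤ D N)
    (hφ : Monotone φ) {B : ℕ → ℝ≥0∞} (hB : ∑' k, B k ≠ ∞) (hφD : ∀ k, D (φ k) < B k) :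
    ∀ᵐ ω ∂μ, ∃ l, Tendsto (fun k => f (φ k) ω) atTop (𝓝 l) := by
  refine Lp.ae_tendsto_of_cauchy_eLpNorm (fun k => hf (φ k)) hq (B := fun k => c⁻¹ * B k)
    (by rw [ENNReal.tsum_mul_left]; exact ENNReal.mul_ne_top (ENNReal.inv_ne_top.2 hc₀) hB)
    fun N n k hn hk => ?_
  calc eLpNorm (fun ω => f (φ n) ω - f (φ k) ω) q μ ≤ c⁻¹ * D (φ N) :=
        (ENNReal.mul_le_iff_le_inv hc₀ hc).1 (hfD _ _ _ (hφ hn) (hφ hk))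
    _ < c⁻¹ * B N :=
        ENNReal.mul_lt_mul_right (ENNReal.inv_ne_zero.2 hc) (ENNReal.inv_ne_top.2 hc₀) (hφD N)

theorem mul_eLpNorm_sub_le_of_ae_tendsto (hc₀ : c ≠ 0) (hc : c ≠ ∞)
    (hf : ∀ n, AEStronglyMeasurable (f n) μ)
    (hfD : ∀ N n k, N ≤ n → N ≤ k → c * eLpNorm (fun ω => f n ω - f k ω) q μ ≤ D N)
    (hφ : Tendsto φ atTop atTop) {g : Ω → E}
    (hg : ∀ᵐ ω ∂μ, Tendsto (fun k => f (φ k) ω) atTop (𝓝 (g ω))) {N n : ℕ} (hn : N ≤ n) :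
    c * eLpNorm (fun ω => f n ω - g ω) q μ ≤ D N := by
  rw [ENNReal.mul_le_iff_le_inv hc₀ hc]
  calc eLpNorm (fun ω => f n ω - g ω) q μ ≤
        atTop.liminf fun k => eLpNorm (fun ω => f n ω - f (φ k) ω) q μ :=
        Lp.eLpNorm_lim_le_liminf_eLpNorm (fun k => (hf n).sub (hf (φ k))) _
          (hg.mono fun ω hω => tendsto_const_nhds.sub hω)
    _ ≤ c⁻¹ * D N := liminf_le_of_frequently_le' <| (hφ.eventually_ge_atTop N).frequently.mono
        fun k hk => (ENNReal.mul_le_iff_le_inv hc₀ hc).1 (hfD N n (φ k) hn hk)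

theorem eLpNorm_le_add_eLpNorm_sub (hq : 1 ≤ q) {u v : Ω → E} (hu : AEStronglyMeasurable u μ)
    (hv : AEStronglyMeasurable v μ) : eLpNorm v q μ ≤ eLpNorm u q μ + eLpNorm (u - v) q μ := by
  simpa using eLpNorm_sub_le hu (hu.sub hv) hq

end SliceLp

section Lnorm

variable {Ω V₀ V₁ : Type*} [MeasurableSpace Ω] [NormedAddCommGroup V₀] [NormedAddCommGroup V₁]
  {P : Measure Ω} {T : ℝ} {hT : 0 ≤ T} {p lam : ℝ}

theorem eLpNorm_zero_le_Lnorm (U : Set.Icc (0:ℝ) T → Ω → V₀) (U₁ : Set.Icc (0:ℝ) T → Ω → V₁) :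
    eLpNorm (U ⟨0, Set.left_mem_Icc.mpr hT⟩) (ENNReal.ofReal p) P ≤
      Lnorm P T hT p lam U U₁ :=
  le_self_add

theorem mul_eLpNorm_le_Lnorm (U : Set.Icc (0:ℝ) T → Ω → V₀) (U₁ : Set.Icc (0:ℝ) T → Ω → V₁)
    {t : Set.Icc (0:ℝ) T} (ht : 0 < (t : ℝ)) :
    ENNReal.ofReal ((t : ℝ) ^ lam) * eLpNorm (U₁ t) (ENNReal.ofReal p) P ≤
      Lnorm P T hT p lam U U₁ :=
  (le_iSup₂ (f := fun (t : Set.Icc (0:ℝ) T) (_ : 0 < (t : ℝ)) =>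
    ENNReal.ofReal ((t : ℝ) ^ lam) * eLpNorm (U₁ t) (ENNReal.ofReal p) P) t ht).trans le_add_self

theorem Lnorm_le_add {U : Set.Icc (0:ℝ) T → Ω → V₀} {U₁ : Set.Icc (0:ℝ) T → Ω → V₁}
    {a b : ℝ≥0∞} (h₀ : eLpNorm (U ⟨0, Set.left_mem_Icc.mpr hT⟩) (ENNReal.ofReal p) P ≤ a)
    (h₁ : ∀ t : Set.Icc (0:ℝ) T, 0 < (t : ℝ) →
      ENNReal.ofReal ((t : ℝ) ^ lam) * eLpNorm (U₁ t) (ENNReal.ofReal p) P ≤ b) :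
    Lnorm P T hT p lam U U₁ ≤ a + b :=
  add_le_add h₀ (iSup₂_le h₁)

theorem Lnorm_le_Lnorm_add_Lnorm_sub (hp : 1 ≤ p)
    {U V : Set.Icc (0:ℝ) T → Ω → V₀} {U₁ V₁ : Set.Icc (0:ℝ) T → Ω → V₁}
    (hU : AEStronglyMeasurable (U ⟨0, Set.left_mem_Icc.mpr hT⟩) P)
    (hV : AEStronglyMeasurable (V ⟨0, Set.left_mem_Icc.mpr hT⟩) P)
    (hU₁ : ∀ t : Set.Icc (0:ℝ) T, 0 < (t : ℝ) → AEStronglyMeasurable (U₁ t) P)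
    (hV₁ : ∀ t : Set.Icc (0:ℝ) T, 0 < (t : ℝ) → AEStronglyMeasurable (V₁ t) P) :
    Lnorm P T hT p lam V V₁ ≤ Lnorm P T hT p lam U U₁ +
      Lnorm P T hT p lam (fun t ω => U t ω - V t ω) (fun t ω => U₁ t ω - V₁ t ω) := by
  have hq : 1 ≤ ENNReal.ofReal p := ENNReal.one_le_ofReal.2 hp
  refine (Lnorm_le_add ?_ fun t ht => ?_).trans_eq (add_add_add_comm _ _ _ _)
  · exact eLpNorm_le_add_eLpNorm_sub hq hU hV
  · calc ENNReal.ofReal ((t : ℝ) ^ lam) * eLpNorm (V₁ t) (ENNReal.ofReal p) P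
        ≤ ENNReal.ofReal ((t : ℝ) ^ lam) * eLpNorm (U₁ t) (ENNReal.ofReal p) P +
          ENNReal.ofReal ((t : ℝ) ^ lam) *
            eLpNorm (fun ω => U₁ t ω - V₁ t ω) (ENNReal.ofReal p) P := by
          rw [← mul_add]
          gcongr
          exact eLpNorm_le_add_eLpNorm_sub hq (hU₁ t ht) (hV₁ t ht)
      _ ≤ _ := add_le_add (le_iSup₂_of_le t ht le_rfl) (le_iSup₂_of_le t ht le_rfl)

end Lnorm

section LnormCauchy

variable {Ω V₀ V₁ : Type*} [MeasurableSpace Ω] [NormedAddCommGroup V₀] [NormedAddCommGroup V₁]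
  {P : Measure Ω} {T : ℝ} {hT : 0 ≤ T} {p lam : ℝ}
  {X : ℕ → Set.Icc (0:ℝ) T → Ω → V₀} {X₁ : ℕ → Set.Icc (0:ℝ) T → Ω → V₁}
  {D B : ℕ → ℝ≥0∞} {φ : ℕ → ℕ}

theorem eLpNorm_zero_sub_le_of_Lnorm_sub_le
    (hXD : ∀ N n k, N ≤ n → N ≤ k → Lnorm P T hT p lam (fun t ω => X n t ω - X k t ω)
      (fun t ω => X₁ n t ω - X₁ k t ω) ≤ D N) (N n k : ℕ) (hn : N ≤ n) (hk : N ≤ k) :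
    eLpNorm (fun ω => X n ⟨0, Set.left_mem_Icc.mpr hT⟩ ω - X k ⟨0, Set.left_mem_Icc.mpr hT⟩ ω)
      (ENNReal.ofReal p) P ≤ D N :=
  (eLpNorm_zero_le_Lnorm (lam := lam) (fun t ω => X n t ω - X k t ω)
    (fun t ω => X₁ n t ω - X₁ k t ω)).trans (hXD N n k hn hk)

theorem mul_eLpNorm_sub_le_of_Lnorm_sub_le
    (hXD : ∀ N n k, N ≤ n → N ≤ k → Lnorm P T hT p lam (fun t ω => X n t ω - X k t ω)
      (fun t ω => X₁ n t ω - X₁ k t ω) ≤ D N) {t : Set.Icc (0:ℝ) T} (ht : 0 < (t : ℝ))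
    (N n k : ℕ) (hn : N ≤ n) (hk : N ≤ k) :
    ENNReal.ofReal ((t : ℝ) ^ lam) * eLpNorm (fun ω => X₁ n t ω - X₁ k t ω) (ENNReal.ofReal p) P ≤
      D N :=
  (mul_eLpNorm_le_Lnorm (hT := hT) (p := p) (fun t ω => X n t ω - X k t ω)
    (fun t ω => X₁ n t ω - X₁ k t ω) ht).trans (hXD N n k hn hk)

theorem ae_exists_tendsto_zero_of_Lnorm_sub_le [CompleteSpace V₀] (hp : 1 ≤ p)
    (hX : ∀ n, AEStronglyMeasurable (X n ⟨0, Set.left_mem_Icc.mpr hT⟩) P)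
    (hXD : ∀ N n k, N ≤ n → N ≤ k → Lnorm P T hT p lam (fun t ω => X n t ω - X k t ω)
      (fun t ω => X₁ n t ω - X₁ k t ω) ≤ D N)
    (hφ : Monotone φ) (hB : ∑' k, B k ≠ ∞) (hφD : ∀ k, D (φ k) < B k) :
    ∀ᵐ ω ∂P, ∃ l, Tendsto (fun k => X (φ k) ⟨0, Set.left_mem_Icc.mpr hT⟩ ω) atTop (𝓝 l) :=
  ae_exists_tendsto_comp_of_mul_eLpNorm_sub_le (ENNReal.one_le_ofReal.2 hp) one_ne_zero
    ENNReal.one_ne_top hX (fun N n k hn hk => by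
      simpa only [one_mul] using eLpNorm_zero_sub_le_of_Lnorm_sub_le hXD N n k hn hk) hφ hB hφD

theorem ae_exists_tendsto_of_Lnorm_sub_le [CompleteSpace V₁] (hp : 1 ≤ p)
    {t : Set.Icc (0:ℝ) T} (ht : 0 < (t : ℝ)) (hX₁ : ∀ n, AEStronglyMeasurable (X₁ n t) P)
    (hXD : ∀ N n k, N ≤ n → N ≤ k → Lnorm P T hT p lam (fun t ω => X n t ω - X k t ω)
      (fun t ω => X₁ n t ω - X₁ k t ω) ≤ D N)
    (hφ : Monotone φ) (hB : ∑' k, B k ≠ ∞) (hφD : ∀ k, D (φ k) < B k) :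
    ∀ᵐ ω ∂P, ∃ l, Tendsto (fun k => X₁ (φ k) t ω) atTop (𝓝 l) :=
  ae_exists_tendsto_comp_of_mul_eLpNorm_sub_le (ENNReal.one_le_ofReal.2 hp)
    (ENNReal.ofReal_pos.2 (Real.rpow_pos_of_pos ht lam)).ne' ENNReal.ofReal_ne_top hX₁
    (mul_eLpNorm_sub_le_of_Lnorm_sub_le hXD ht) hφ hB hφD

theorem Lnorm_sub_le_of_ae_tendsto
    (hX : ∀ n, AEStronglyMeasurable (X n ⟨0, Set.left_mem_Icc.mpr hT⟩) P)
    (hX₁ : ∀ n (t : Set.Icc (0:ℝ) T), 0 < (t : ℝ) → AEStronglyMeasurable (X₁ n t) P)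
    (hXD : ∀ N n k, N ≤ n → N ≤ k → Lnorm P T hT p lam (fun t ω => X n t ω - X k t ω)
      (fun t ω => X₁ n t ω - X₁ k t ω) ≤ D N)
    (hφ : Tendsto φ atTop atTop) {Y : Set.Icc (0:ℝ) T → Ω → V₀} {Y₁ : Set.Icc (0:ℝ) T → Ω → V₁}
    (hY : ∀ᵐ ω ∂P, Tendsto (fun k => X (φ k) ⟨0, Set.left_mem_Icc.mpr hT⟩ ω) atTop
      (𝓝 (Y ⟨0, Set.left_mem_Icc.mpr hT⟩ ω)))
    (hY₁ : ∀ t : Set.Icc (0:ℝ) T, 0 < (t : ℝ) →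
      ∀ᵐ ω ∂P, Tendsto (fun k => X₁ (φ k) t ω) atTop (𝓝 (Y₁ t ω)))
    {N n : ℕ} (hn : N ≤ n) :
    Lnorm P T hT p lam (fun t ω => X n t ω - Y t ω) (fun t ω => X₁ n t ω - Y₁ t ω) ≤
      D N + D N := by
  refine Lnorm_le_add ?_ fun t ht => ?_
  · simpa only [one_mul] using mul_eLpNorm_sub_le_of_ae_tendsto one_ne_zero ENNReal.one_ne_top hX
      (fun N n k hn hk => by
        simpa only [one_mul] using eLpNorm_zero_sub_le_of_Lnorm_sub_le hXD N n k hn hk) hφ hY hn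
  · exact mul_eLpNorm_sub_le_of_ae_tendsto
      (ENNReal.ofReal_pos.2 (Real.rpow_pos_of_pos ht lam)).ne' ENNReal.ofReal_ne_top (hX₁ · t ht)
      (mul_eLpNorm_sub_le_of_Lnorm_sub_le hXD ht) hφ (hY₁ t ht) hn

theorem Lnorm_lt_top_of_ae_tendsto (hp : 1 ≤ p)
    (hX : ∀ n, AEStronglyMeasurable (X n ⟨0, Set.left_mem_Icc.mpr hT⟩) P)
    (hX₁ : ∀ n (t : Set.Icc (0:ℝ) T), 0 < (t : ℝ) → AEStronglyMeasurable (X₁ n t) P)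
    {Y : Set.Icc (0:ℝ) T → Ω → V₀} {Y₁ : Set.Icc (0:ℝ) T → Ω → V₁}
    (hY : ∀ᵐ ω ∂P, Tendsto (fun k => X (φ k) ⟨0, Set.left_mem_Icc.mpr hT⟩ ω) atTop
      (𝓝 (Y ⟨0, Set.left_mem_Icc.mpr hT⟩ ω)))
    (hY₁ : ∀ t : Set.Icc (0:ℝ) T, 0 < (t : ℝ) →
      ∀ᵐ ω ∂P, Tendsto (fun k => X₁ (φ k) t ω) atTop (𝓝 (Y₁ t ω)))
    {N : ℕ} (hXN : Lnorm P T hT p lam (X N) (X₁ N) < ⊤)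
    (hXY : Lnorm P T hT p lam (fun t ω => X N t ω - Y t ω) (fun t ω => X₁ N t ω - Y₁ t ω) < ⊤) :
    Lnorm P T hT p lam Y Y₁ < ⊤ :=
  (Lnorm_le_Lnorm_add_Lnorm_sub hp (hX N)
    (aestronglyMeasurable_of_tendsto_ae atTop (fun k => hX (φ k)) hY) (hX₁ N)
    fun t ht => aestronglyMeasurable_of_tendsto_ae atTop (fun k => hX₁ (φ k) t ht) (hY₁ t ht)
  ).trans_lt (ENNReal.add_lt_top.2 ⟨hXN, hXY⟩)

end LnormCauchy

theorem weighted_predictable_space_complete_general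
    {Ω V₀ V₁ : Type*} [m : MeasurableSpace Ω]
    [NormedAddCommGroup V₀] [NormedSpace ℝ V₀] [CompleteSpace V₀]
    [TopologicalSpace.SeparableSpace V₀]
    [NormedAddCommGroup V₁] [NormedSpace ℝ V₁] [CompleteSpace V₁]
    [TopologicalSpace.SeparableSpace V₁]
    [MeasurableSpace V₀] [BorelSpace V₀]
    (ι : V₁ →L[ℝ] V₀) (hι : Function.Injective ι)
    (T : ℝ) (hT : 0 < T) (lam p : ℝ) (hp : 1 ≤ p)
    (P : Measure Ω)
    (𝓕 : ℝ → MeasurableSpace Ω)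
    (h_le : ∀ t : ℝ, 𝓕 t ≤ m)
    (X : ℕ → Set.Icc (0:ℝ) T → Ω → V₀)
    (X₁ : ℕ → Set.Icc (0:ℝ) T → Ω → V₁)
    (hX_pred : ∀ n : ℕ,
      Measurable[Pred 𝓕 T] (fun q : Set.Icc (0:ℝ) T × Ω => X n q.1 q.2))
    (hX_val : ∀ (n : ℕ) (t : Set.Icc (0:ℝ) T), 0 < (t : ℝ) → ∀ ω : Ω,
      X n t ω = ι (X₁ n t ω))
    (hX_fin : ∀ n : ℕ, Lnorm P T hT.le p lam (X n) (X₁ n) < ⊤)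
    (hCauchy : Filter.limsup (fun N : ℕ =>
        ⨆ (n : ℕ) (_ : N ≤ n) (k : ℕ) (_ : N ≤ k),
          Lnorm P T hT.le p lam (fun t ω => X n t ω - X k t ω)
            (fun t ω => X₁ n t ω - X₁ k t ω)) Filter.atTop = 0) :
    ∃ (Y : Set.Icc (0:ℝ) T → Ω → V₀) (Y₁ : Set.Icc (0:ℝ) T → Ω → V₁),
      Measurable[Pred 𝓕 T] (fun q : Set.Icc (0:ℝ) T × Ω => Y q.1 q.2) ∧
      (∀ (t : Set.Icc (0:ℝ) T), 0 < (t : ℝ) → ∀ ω : Ω, Y t ω = ι (Y₁ t ω)) ∧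
      Lnorm P T hT.le p lam Y Y₁ < ⊤ ∧
      Filter.limsup (fun N : ℕ =>
        Lnorm P T hT.le p lam (fun t ω => X N t ω - Y t ω)
          (fun t ω => X₁ N t ω - Y₁ t ω)) Filter.atTop = 0 := by
  borelize V₁
  set D : ℕ → ℝ≥0∞ := fun N => ⨆ (n : ℕ) (_ : N ≤ n) (k : ℕ) (_ : N ≤ k),
    Lnorm P T hT.le p lam (fun t ω => X n t ω - X k t ω) (fun t ω => X₁ n t ω - X₁ k t ω)
  have hXD : ∀ N n k, N ≤ n → N ≤ k → Lnorm P T hT.le p lam (fun t ω => X n t ω - X k t ω)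
      (fun t ω => X₁ n t ω - X₁ k t ω) ≤ D N :=
    fun N n k hn hk => le_iSup₂_of_le n hn (le_iSup₂_of_le k hk le_rfl)
  have hD : Tendsto D atTop (𝓝 0) :=
    tendsto_of_liminf_eq_limsup (nonpos_iff_eq_zero.1 (hCauchy ▸ liminf_le_limsup)) hCauchy
  obtain ⟨φ, hφ, hφD⟩ := extraction_forall_of_eventually fun k =>
    hD.eventually (gt_mem_nhds (ENNReal.pow_pos (ENNReal.inv_pos.2 ENNReal.ofNat_ne_top) k :
      (0 : ℝ≥0∞) < 2⁻¹ ^ k))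
  have hB : ∑' k, (2⁻¹ : ℝ≥0∞) ^ k ≠ ∞ := ENNReal.tsum_geometric_two.trans_ne ENNReal.ofNat_ne_top
  have hι_emb : MeasurableEmbedding ι := ι.continuous.measurableEmbedding hι
  have hX : ∀ n t, Measurable (X n t) := fun n t =>
    (hX_pred n).comp (measurable_prodMk_left_pred h_le t)
  have hX₁ : ∀ n (t : Set.Icc (0:ℝ) T), 0 < (t : ℝ) → Measurable (X₁ n t) := fun n t ht =>
    hι_emb.measurable_comp_iff.1 <| by simpa only [Function.comp_def, ← hX_val n t ht] using hX n t
  obtain ⟨Y, Y₁, hY_pred, hY_val, hY, hY₁⟩ :=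
    exists_pred_limUnder hι_emb (fun k => hX_pred (φ k)) fun k => hX_val (φ k)
  replace hY := (ae_exists_tendsto_zero_of_Lnorm_sub_le hp (fun n => (hX n _).aestronglyMeasurable)
    hXD hφ.monotone hB hφD).mono (hY _ rfl)
  replace hY₁ := fun t ht => (ae_exists_tendsto_of_Lnorm_sub_le hp ht
    (fun n => (hX₁ n t ht).aestronglyMeasurable) hXD hφ.monotone hB hφD).mono (hY₁ t ht)
  have hXY := fun N => Lnorm_sub_le_of_ae_tendsto (fun n => (hX n _).aestronglyMeasurable)
    (fun n t ht => (hX₁ n t ht).aestronglyMeasurable) hXD hφ.tendsto_atTop hY hY₁ (le_refl N)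
  obtain ⟨N, hN⟩ := (hD.eventually (gt_mem_nhds ENNReal.zero_lt_top)).exists
  refine ⟨Y, Y₁, hY_pred, hY_val, ?_, ?_⟩
  · exact Lnorm_lt_top_of_ae_tendsto hp (fun n => (hX n _).aestronglyMeasurable)
      (fun n t ht => (hX₁ n t ht).aestronglyMeasurable) hY hY₁ (hX_fin N)
      ((hXY N).trans_lt (ENNReal.add_lt_top.2 ⟨hN, hN⟩))
  · exact (tendsto_of_tendsto_of_tendsto_of_le_of_le tendsto_const_nhds
      (by simpa using hD.add hD) (fun _ => zero_le) hXY).limsup_eq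

/-- **Completeness of the weighted space of predictable processes with a singularity at
the initial time.**  If `V₁ ⊆ V₀` continuously and densely (separable ℝ-Banach spaces),
`T ∈ (0,∞)`, `λ ∈ ℝ`, `p ∈ [1,∞)`, and `(X^N)_{N∈ℕ}` is a sequence in the space `𝓛` of
predictable processes `X : [0,T] × Ω → V₀` with `X((0,T] × Ω) ⊆ V₁` and
`|X|_𝓛 = ‖X_0‖_{L^p(P;V₀)} + sup_{t∈(0,T]} t^λ ‖X_t‖_{L^p(P;V₁)} < ∞`
which is Cauchy in the sense that `limsup_{N→∞} sup_{n,m≥N} |X^n − X^m|_𝓛 = 0`,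
then there exists `Y ∈ 𝓛` with `limsup_{N→∞} |X^N − Y|_𝓛 = 0`.
(The inclusion `V₁ ⊆ V₀` is encoded by the injective dense continuous linear map `ι`,
and membership of values in `V₁` by the lifted processes `X₁`, `Y₁`.) -/
theorem weighted_predictable_space_complete
    {Ω V₀ V₁ : Type*} [m : MeasurableSpace Ω]
    [NormedAddCommGroup V₀] [NormedSpace ℝ V₀] [CompleteSpace V₀]
    [TopologicalSpace.SeparableSpace V₀]
    [NormedAddCommGroup V₁] [NormedSpace ℝ V₁] [CompleteSpace V₁]
    [TopologicalSpace.SeparableSpace V₁]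
    [MeasurableSpace V₀] [BorelSpace V₀]
    (ι : V₁ →L[ℝ] V₀) (hι : Function.Injective ι) (hdense : DenseRange ι)
    (T : ℝ) (hT : 0 < T) (lam p : ℝ) (hp : 1 ≤ p)
    (P : Measure Ω) [IsProbabilityMeasure P]
    (𝓕 : ℝ → MeasurableSpace Ω)
    (h_le : ∀ t : ℝ, 𝓕 t ≤ m)
    (h_mono : ∀ s t : ℝ, s ≤ t → 𝓕 s ≤ 𝓕 t)
    (X : ℕ → Set.Icc (0:ℝ) T → Ω → V₀)
    (X₁ : ℕ → Set.Icc (0:ℝ) T → Ω → V₁)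
    (hX_pred : ∀ n : ℕ,
      Measurable[Pred 𝓕 T] (fun q : Set.Icc (0:ℝ) T × Ω => X n q.1 q.2))
    (hX_val : ∀ (n : ℕ) (t : Set.Icc (0:ℝ) T), 0 < (t : ℝ) → ∀ ω : Ω,
      X n t ω = ι (X₁ n t ω))
    (hX_fin : ∀ n : ℕ, Lnorm P T hT.le p lam (X n) (X₁ n) < ⊤)
    (hCauchy : Filter.limsup (fun N : ℕ =>
        ⨆ (n : ℕ) (_ : N ≤ n) (k : ℕ) (_ : N ≤ k),
          Lnorm P T hT.le p lam (fun t ω => X n t ω - X k t ω)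
            (fun t ω => X₁ n t ω - X₁ k t ω)) Filter.atTop = 0) :
    ∃ (Y : Set.Icc (0:ℝ) T → Ω → V₀) (Y₁ : Set.Icc (0:ℝ) T → Ω → V₁),
      Measurable[Pred 𝓕 T] (fun q : Set.Icc (0:ℝ) T × Ω => Y q.1 q.2) ∧
      (∀ (t : Set.Icc (0:ℝ) T), 0 < (t : ℝ) → ∀ ω : Ω, Y t ω = ι (Y₁ t ω)) ∧
      Lnorm P T hT.le p lam Y Y₁ < ⊤ ∧
      Filter.limsup (fun N : ℕ =>
        Lnorm P T hT.le p lam (fun t ω => X N t ω - Y t ω)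
          (fun t ω => X₁ N t ω - Y₁ t ω)) Filter.atTop = 0 :=
  weighted_predictable_space_complete_general (m := m) ι hι T hT lam p hp P 𝓕 h_le X X₁ hX_pred
    hX_val hX_fin hCauchy
end
end

section
/- For all α, β ∈ (−∞,1) and all x ∈ [0,∞) the series defining the generalized exponential function converges, i.e., it holds that 1 + Σ_{n=1}^∞ x^n ∏_{k=0}^{n−1} 𝔹(1 − β, k(1 − β) + 1 − α) < ∞; in particular, E_{α,β} is a well-defined function from [0,∞) to [0,∞). -/
open MeasureTheory Set
open scoped ENNReal

noncomputable section

/-- The Beta function `𝔹(x,y) = ∫_0^1 t^(x-1) (1-t)^(y-1) dt`. -/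
def Beta (x y : ℝ) : ℝ :=
  ∫ t in (0:ℝ)..1, t ^ (x - 1) * (1 - t) ^ (y - 1)

/-- The generalized exponential function
`E_{a,b}[x] = 1 + Σ_{n=1}^∞ x^n ∏_{k=0}^{n-1} 𝔹(1-b, k(1-b)+1-a)` (valued in `[0,∞]`). -/
def genExp (a b x : ℝ) : ℝ≥0∞ :=
  1 + ∑' n : ℕ, ENNReal.ofReal
      (x ^ (n + 1) * ∏ k ∈ Finset.range (n + 1), Beta (1 - b) ((k : ℝ) * (1 - b) + 1 - a))

open Filter
open scoped Topology

/-- The Beta integrand is interval integrable on `[0,1]` when both exponents have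
positive real part. -/
private lemma beta_integrable {x y : ℝ} (hx : 0 < x) (hy : 0 < y) :
    IntervalIntegrable (fun t : ℝ => t ^ (x - 1) * (1 - t) ^ (y - 1)) volume 0 1 := by
  have left : ∀ u v : ℝ, 0 < u →
      IntervalIntegrable (fun t : ℝ => t ^ (u - 1) * (1 - t) ^ (v - 1)) volume 0 (1/2) := by
    intro u v hu
    apply IntervalIntegrable.mul_continuousOn
    · exact intervalIntegral.intervalIntegrable_rpow' (by linarith)
    · apply ContinuousOn.rpow_const
      · exact (continuous_const.sub continuous_id).continuousOn
      · intro t ht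
        rw [uIcc_of_le (by norm_num : (0:ℝ) ≤ 1/2)] at ht
        left
        have := ht.2
        intro h; rw [sub_eq_zero] at h; rw [← h] at this; norm_num at this
  refine (left x y hx).trans ?_
  have h2 := ((left y x hy).comp_sub_left 1).symm
  have heq : (fun t : ℝ => ((1:ℝ) - t) ^ (y - 1) * (1 - (1 - t)) ^ (x - 1)) =
      fun t : ℝ => t ^ (x - 1) * (1 - t) ^ (y - 1) := by
    funext t; rw [sub_sub_cancel, mul_comm]
  rw [heq] at h2
  norm_num at h2
  exact h2

/-- The Beta function is nonnegative. -/
private lemma beta_nonneg (x y : ℝ) : 0 ≤ Beta x y := by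
  apply intervalIntegral.integral_nonneg (by norm_num)
  intro t ht
  exact mul_nonneg (Real.rpow_nonneg ht.1 _) (Real.rpow_nonneg (by linarith [ht.2]) _)

/-- For fixed positive first argument, `Beta x y` is eventually smaller than any positive `ε`
as `y → ∞`. -/
private lemma beta_small {x : ℝ} (hx : 0 < x) {ε : ℝ} (hε : 0 < ε) :
    ∀ᶠ y in atTop, Beta x y ≤ ε := by
  set δ : ℝ := min (1/2) ((ε * x / 2) ^ (1/x)) with hδdef
  have hδpos : 0 < δ := lt_min (by norm_num) (Real.rpow_pos_of_pos (by positivity) _)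
  have hδhalf : δ ≤ 1/2 := min_le_left _ _
  have hδx : δ ^ x ≤ ε * x / 2 := by
    calc δ ^ x ≤ ((ε * x / 2) ^ (1/x)) ^ x :=
          Real.rpow_le_rpow hδpos.le (min_le_right _ _) hx.le
      _ = ε * x / 2 := by
          rw [← Real.rpow_mul (by positivity), one_div, inv_mul_cancel₀ hx.ne', Real.rpow_one]
  set M : ℝ := δ ^ (x - 1) + 1 with hM
  have hMpos : 0 < M := by positivity
  have main : ∀ y : ℝ, 1 ≤ y → Beta x y ≤ ε / 2 + M * (1 - δ) ^ (y - 1) := by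
    intro y hy
    have hy0 : (0:ℝ) < y := by linarith
    have I : IntervalIntegrable (fun t : ℝ => t ^ (x - 1) * (1 - t) ^ (y - 1)) volume 0 1 :=
      beta_integrable hx hy0
    have I1 : IntervalIntegrable (fun t : ℝ => t ^ (x - 1) * (1 - t) ^ (y - 1)) volume 0 δ := by
      apply I.mono_set
      rw [uIcc_of_le hδpos.le, uIcc_of_le (by norm_num : (0:ℝ) ≤ 1)]
      exact Icc_subset_Icc le_rfl (by linarith)
    have I2 : IntervalIntegrable (fun t : ℝ => t ^ (x - 1) * (1 - t) ^ (y - 1)) volume δ 1 := by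
      apply I.mono_set
      rw [uIcc_of_le (by linarith : δ ≤ 1), uIcc_of_le (by norm_num : (0:ℝ) ≤ 1)]
      exact Icc_subset_Icc hδpos.le le_rfl
    have hsplit : Beta x y = (∫ t in (0:ℝ)..δ, t ^ (x - 1) * (1 - t) ^ (y - 1))
        + ∫ t in δ..1, t ^ (x - 1) * (1 - t) ^ (y - 1) :=
      (intervalIntegral.integral_add_adjacent_intervals I1 I2).symm
    have bound1 : (∫ t in (0:ℝ)..δ, t ^ (x - 1) * (1 - t) ^ (y - 1)) ≤ ε / 2 := by
      have h1 : (∫ t in (0:ℝ)..δ, t ^ (x - 1) * (1 - t) ^ (y - 1))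
          ≤ ∫ t in (0:ℝ)..δ, t ^ (x - 1) := by
        apply intervalIntegral.integral_mono_on hδpos.le I1
          (intervalIntegral.intervalIntegrable_rpow' (by linarith))
        intro t ht
        have h2 : (1 - t) ^ (y - 1) ≤ 1 :=
          Real.rpow_le_one (by linarith [ht.2]) (by linarith [ht.1]) (by linarith)
        calc t ^ (x - 1) * (1 - t) ^ (y - 1) ≤ t ^ (x - 1) * 1 :=
              mul_le_mul_of_nonneg_left h2 (Real.rpow_nonneg ht.1 _)
          _ = t ^ (x - 1) := mul_one _
      have h3 : (∫ t in (0:ℝ)..δ, t ^ (x - 1)) = δ ^ x / x := by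
        rw [integral_rpow (Or.inl (by linarith))]
        rw [Real.zero_rpow (by intro h; linarith : x - 1 + 1 ≠ 0)]
        rw [sub_add_cancel, sub_zero]
      have h4 : δ ^ x / x ≤ ε / 2 := by
        rw [div_le_iff₀ hx]
        calc δ ^ x ≤ ε * x / 2 := hδx
          _ = ε / 2 * x := by ring
      linarith
    have bound2 : (∫ t in δ..1, t ^ (x - 1) * (1 - t) ^ (y - 1))
        ≤ M * (1 - δ) ^ (y - 1) := by
      have h1 : (∫ t in δ..1, t ^ (x - 1) * (1 - t) ^ (y - 1))
          ≤ ∫ _ in δ..1, M * (1 - δ) ^ (y - 1) := by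
        apply intervalIntegral.integral_mono_on (by linarith) I2 intervalIntegrable_const
        intro t ht
        have htx : t ^ (x - 1) ≤ M := by
          rcases le_or_gt 1 x with hc | hc
          · have : t ^ (x - 1) ≤ 1 :=
              Real.rpow_le_one (by linarith [ht.1]) ht.2 (by linarith)
            have : (0:ℝ) ≤ δ ^ (x - 1) := Real.rpow_nonneg hδpos.le _
            rw [hM]; linarith
          · have : t ^ (x - 1) ≤ δ ^ (x - 1) :=
              Real.rpow_le_rpow_of_nonpos hδpos ht.1 (by linarith)
            rw [hM]; linarith
        have hty : (1 - t) ^ (y - 1) ≤ (1 - δ) ^ (y - 1) :=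
          Real.rpow_le_rpow (by linarith [ht.2]) (by linarith [ht.1]) (by linarith)
        exact mul_le_mul htx hty (Real.rpow_nonneg (by linarith [ht.2]) _) hMpos.le
      have h2 : (∫ _ in δ..1, M * (1 - δ) ^ (y - 1)) = (1 - δ) * (M * (1 - δ) ^ (y - 1)) := by
        rw [intervalIntegral.integral_const, smul_eq_mul]
      have h3 : (1 - δ) * (M * (1 - δ) ^ (y - 1)) ≤ M * (1 - δ) ^ (y - 1) :=
        mul_le_of_le_one_left (mul_nonneg hMpos.le (Real.rpow_nonneg (by linarith) _))
          (by linarith)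
      linarith
    exact hsplit ▸ add_le_add bound1 bound2
  have htend : Tendsto (fun y : ℝ => ε / 2 + M * (1 - δ) ^ (y - 1)) atTop (𝓝 (ε / 2 + M * 0)) := by
    apply Tendsto.const_add
    apply Tendsto.const_mul
    exact (tendsto_rpow_atTop_of_base_lt_one _ (by linarith) (by linarith)).comp
      (tendsto_atTop_add_const_right atTop (-1) tendsto_id)
  rw [mul_zero, add_zero] at htend
  filter_upwards [htend.eventually_le_const (by linarith : ε / 2 < ε),
    eventually_ge_atTop (1:ℝ)] with y h1 h2
  exact le_trans (main y h2) h1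

private lemma tsum_ofReal_lt_top {f : ℕ → ℝ} (hf : ∀ n, 0 ≤ f n) (h : Summable f) :
    ∑' n, ENNReal.ofReal (f n) < ⊤ := by
  rw [← ENNReal.ofReal_tsum_of_nonneg hf h]; exact ENNReal.ofReal_lt_top

/-- **Convergence of the series defining the generalized exponential function.**
For all `α, β < 1` and `x ≥ 0` the series
`Σ_{n=1}^∞ x^n ∏_{k=0}^{n-1} 𝔹(1-β, k(1-β)+1-α)` converges, so that
`E_{α,β}[x] = 1 + Σ_{n=1}^∞ x^n ∏_{k=0}^{n-1} 𝔹(1-β, k(1-β)+1-α) < ∞`;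
in particular `E_{α,β}` is a well-defined function from `[0,∞)` to `[0,∞)`. -/
theorem genExp_summable_and_lt_top
    (α β : ℝ) (hα : α < 1) (hβ : β < 1) (x : ℝ) (hx : 0 ≤ x) :
    Summable (fun n : ℕ =>
      x ^ (n + 1) * ∏ k ∈ Finset.range (n + 1), Beta (1 - β) ((k : ℝ) * (1 - β) + 1 - α)) ∧
    genExp α β x < ⊤ := by
  have hx0 : 0 < 1 - β := by linarith
  set a : ℕ → ℝ := fun n => x ^ (n + 1) *
    ∏ k ∈ Finset.range (n + 1), Beta (1 - β) ((k : ℝ) * (1 - β) + 1 - α) with ha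
  have hanonneg : ∀ n, 0 ≤ a n := fun n =>
    mul_nonneg (pow_nonneg hx _) (Finset.prod_nonneg fun k _ => beta_nonneg _ _)
  have hsum : Summable a := by
    apply summable_of_ratio_norm_eventually_le (r := 1/2) (by norm_num)
    have hε : (0:ℝ) < 1 / (2 * (x + 1)) := by positivity
    have htend : Tendsto (fun n : ℕ => ((n:ℝ) + 1) * (1 - β) + 1 - α) atTop atTop := by
      have h1 : Tendsto (fun n : ℕ => ((n:ℝ) + 1)) atTop atTop :=
        tendsto_atTop_add_const_right _ 1 tendsto_natCast_atTop_atTop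
      have h2 := Filter.Tendsto.atTop_mul_const hx0 h1
      have h3 := tendsto_atTop_add_const_right atTop (1 - α) h2
      refine h3.congr fun n => by ring
    filter_upwards [htend.eventually (beta_small hx0 hε)] with n hn
    rw [Real.norm_of_nonneg (hanonneg _), Real.norm_of_nonneg (hanonneg _)]
    have hstep : a (n + 1) = a n *
        (x * Beta (1 - β) (((n + 1 : ℕ) : ℝ) * (1 - β) + 1 - α)) := by
      simp only [ha]
      rw [Finset.prod_range_succ, pow_succ]
      ring
    have hcast : (((n + 1 : ℕ) : ℝ)) * (1 - β) + 1 - α = ((n:ℝ) + 1) * (1 - β) + 1 - α := by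
      push_cast; ring
    rw [hstep, hcast]
    have hxb : x * Beta (1 - β) (((n:ℝ) + 1) * (1 - β) + 1 - α) ≤ 1/2 := by
      calc x * Beta (1 - β) (((n:ℝ) + 1) * (1 - β) + 1 - α)
          ≤ x * (1 / (2 * (x + 1))) := mul_le_mul_of_nonneg_left hn hx
        _ ≤ 1/2 := by
            rw [mul_one_div, div_le_iff₀ (by positivity)]
            nlinarith
    calc a n * (x * Beta (1 - β) (((n:ℝ) + 1) * (1 - β) + 1 - α))
        ≤ a n * (1/2) := mul_le_mul_of_nonneg_left hxb (hanonneg n)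
      _ = 1/2 * a n := by ring
  refine ⟨hsum, ?_⟩
  rw [genExp]
  exact ENNReal.add_lt_top.mpr ⟨ENNReal.one_lt_top, tsum_ofReal_lt_top hanonneg hsum⟩
end
end

section
/- Let T ∈ (0,∞), β ∈ [0,1/2), λ, β̂ ∈ (−∞,1/2), L, L̂ ∈ [0,∞), and set ρ = max{λ, β̂} if L > 0 and ρ = β̂ if L = 0. Then for all t ∈ (0,T] it holds that ∫_0^t (t − s)^{−2β} ( L s^{−λ} + L̂ s^{−β̂} )^2 ds ≤ ( L + L̂ )^2 · ( max{T,1} )^{ 2|λ − β̂| · 1_{(0,∞)}(L) } · 𝔹( 1 − 2β, 1 − 2ρ ) · t^{( 1 − 2β − 2ρ )}. -/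
/-!
For `0 < s ≤ t ≤ max T 1` and `μ ≤ ρ`, `s^(-μ) = s^(ρ-μ) s^(-ρ) ≤ (max T 1)^(ρ-μ) s^(-ρ)`, so
`L s^(-λ) + L̂ s^(-β̂) ≤ (L + L̂) (max T 1)^(|λ-β̂|·1_{L>0}) s^(-ρ)`. The integrand is therefore
dominated by a constant times `(t-s)^(-2β) s^(-2ρ)`, whose integral over `(0,t]` is
`𝔹(1-2β, 1-2ρ) t^(1-2β-2ρ)` by the substitution `s = t u`.
-/

open MeasureTheory Set
open scoped ENNReal

noncomputable section

lemma ofReal_Beta_integrand {x y u : ℝ} (hu : u ∈ Icc (0:ℝ) 1) :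
    ((u ^ (x - 1) * (1 - u) ^ (y - 1) : ℝ) : ℂ) =
      (u : ℂ) ^ ((x : ℂ) - 1) * (1 - (u : ℂ)) ^ ((y : ℂ) - 1) := by
  push_cast [Complex.ofReal_cpow hu.1, Complex.ofReal_cpow (sub_nonneg.2 hu.2)]
  rfl

theorem ofReal_Beta (x y : ℝ) : (Beta x y : ℂ) = Complex.betaIntegral x y := by
  rw [Beta, ← intervalIntegral.integral_ofReal, Complex.betaIntegral]
  refine intervalIntegral.integral_congr fun u hu => ?_
  exact ofReal_Beta_integrand (by rwa [uIcc_of_le zero_le_one] at hu)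

theorem Beta_comm (x y : ℝ) : Beta y x = Beta x y := by
  apply Complex.ofReal_injective
  rw [ofReal_Beta, ofReal_Beta, Complex.betaIntegral_symm]

theorem intervalIntegrable_Beta_integrand {x y : ℝ} (hx : 0 < x) (hy : 0 < y) :
    IntervalIntegrable (fun u : ℝ => u ^ (x - 1) * (1 - u) ^ (y - 1)) volume 0 1 := by
  have h := Complex.betaIntegral_convergent (u := x) (v := y) (by simpa) (by simpa)
  rw [intervalIntegrable_iff_integrableOn_Icc_of_le zero_le_one] at h ⊢
  refine IntegrableOn.congr_fun (Integrable.re h) (fun u hu => ?_) measurableSet_Icc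
  exact (congrArg RCLike.re (ofReal_Beta_integrand hu)).symm.trans (RCLike.ofReal_re _)

open Real

lemma rpow_sub_mul_rpow_eq {t s x y : ℝ} (ht : 0 < t) (hs : s ∈ Icc 0 t) :
    (t - s) ^ (x - 1) * s ^ (y - 1) =
      t ^ (x - 1) * t ^ (y - 1) * ((s / t) ^ (y - 1) * (1 - s / t) ^ (x - 1)) := by
  rw [one_sub_div ht.ne', div_rpow hs.1 ht.le, div_rpow (sub_nonneg.2 hs.2) ht.le]
  have : t ^ (x - 1) ≠ 0 := (rpow_pos_of_pos ht _).ne'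
  have : t ^ (y - 1) ≠ 0 := (rpow_pos_of_pos ht _).ne'
  field_simp

theorem integral_rpow_sub_mul_rpow {t : ℝ} (x y : ℝ) (ht : 0 < t) :
    ∫ s in (0:ℝ)..t, (t - s) ^ (x - 1) * s ^ (y - 1) = Beta x y * t ^ (x + y - 1) := by
  rw [intervalIntegral.integral_congr fun s hs =>
      rpow_sub_mul_rpow_eq ht (by rwa [uIcc_of_le ht.le] at hs),
    intervalIntegral.integral_const_mul,
    intervalIntegral.integral_comp_div (fun u => u ^ (y - 1) * (1 - u) ^ (x - 1)) ht.ne',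
    zero_div, div_self ht.ne', ← Beta, Beta_comm, smul_eq_mul,
    ← rpow_add ht, show x + y - 1 = x - 1 + (y - 1) + 1 by ring, rpow_add_one ht.ne']
  ring

theorem integrableOn_rpow_sub_mul_rpow {t x y : ℝ} (hx : 0 < x) (hy : 0 < y) (ht : 0 < t) :
    IntegrableOn (fun s => (t - s) ^ (x - 1) * s ^ (y - 1)) (Ioc 0 t) := by
  have h := ((intervalIntegrable_Beta_integrand hy hx).comp_mul_left (c := t⁻¹)).const_mul
    (t ^ (x - 1) * t ^ (y - 1))
  rw [zero_div, one_div, inv_inv, intervalIntegrable_iff_integrableOn_Ioc_of_le ht.le] at h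
  refine h.congr_fun (fun s hs => ?_) measurableSet_Ioc
  simp only [rpow_sub_mul_rpow_eq ht (Ioc_subset_Icc_self hs), inv_mul_eq_div]

theorem lintegral_rpow_sub_mul_rpow {t x y : ℝ} (hx : 0 < x) (hy : 0 < y) (ht : 0 < t) :
    ∫⁻ s in Ioc 0 t, ENNReal.ofReal ((t - s) ^ (x - 1) * s ^ (y - 1)) =
      ENNReal.ofReal (Beta x y * t ^ (x + y - 1)) := by
  rw [← ofReal_integral_eq_lintegral_ofReal (integrableOn_rpow_sub_mul_rpow hx hy ht),
    ← intervalIntegral.integral_of_le ht.le, integral_rpow_sub_mul_rpow x y ht]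
  filter_upwards [ae_restrict_mem measurableSet_Ioc] with s hs
  exact mul_nonneg (rpow_nonneg (sub_nonneg.2 hs.2) _) (rpow_nonneg hs.1.le _)

theorem lintegral_ofReal_le_of_le_mul_rpow_sub_mul_rpow {f : ℝ → ℝ} {C t x y : ℝ}
    (hx : 0 < x) (hy : 0 < y) (ht : 0 < t) (hC : 0 ≤ C)
    (hf : ∀ s ∈ Ioc 0 t, f s ≤ C * ((t - s) ^ (x - 1) * s ^ (y - 1))) :
    ∫⁻ s in Ioc 0 t, ENNReal.ofReal (f s) ≤ ENNReal.ofReal (C * Beta x y * t ^ (x + y - 1)) :=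
  calc ∫⁻ s in Ioc 0 t, ENNReal.ofReal (f s)
      ≤ ∫⁻ s in Ioc 0 t,
          ENNReal.ofReal C * ENNReal.ofReal ((t - s) ^ (x - 1) * s ^ (y - 1)) :=
        setLIntegral_mono' measurableSet_Ioc fun s hs =>
          (ENNReal.ofReal_le_ofReal (hf s hs)).trans_eq (ENNReal.ofReal_mul hC)
    _ = ENNReal.ofReal (C * Beta x y * t ^ (x + y - 1)) := by
        rw [lintegral_const_mul' _ _ ENNReal.ofReal_ne_top, lintegral_rpow_sub_mul_rpow hx hy ht,
          ← ENNReal.ofReal_mul hC, mul_assoc]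

lemma rpow_neg_le_mul_rpow_neg {s M μ ρ e : ℝ} (hs : 0 < s) (hsM : s ≤ M) (hM : 1 ≤ M)
    (hμρ : μ ≤ ρ) (he : ρ - μ ≤ e) : s ^ (-μ) ≤ M ^ e * s ^ (-ρ) :=
  calc s ^ (-μ) = s ^ (ρ - μ) * s ^ (-ρ) := by rw [← rpow_add hs]; ring_nf
    _ ≤ M ^ e * s ^ (-ρ) := by
      gcongr
      exact (rpow_le_rpow hs.le hsM (by linarith)).trans (rpow_le_rpow_of_exponent_le hM he)

lemma mul_rpow_neg_add_mul_rpow_neg_le {s M a b L L' : ℝ} (hs : 0 < s) (hsM : s ≤ M)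
    (hM : 1 ≤ M) (hL : 0 ≤ L) (hL' : 0 ≤ L') :
    L * s ^ (-a) + L' * s ^ (-b) ≤ (L + L') * M ^ |a - b| * s ^ (-max a b) := by
  have ha : s ^ (-a) ≤ M ^ |a - b| * s ^ (-max a b) :=
    rpow_neg_le_mul_rpow_neg hs hsM hM (le_max_left a b) (by
      rcases max_cases a b with h | h <;> rcases abs_cases (a - b) with h' | h' <;> linarith)
  have hb : s ^ (-b) ≤ M ^ |a - b| * s ^ (-max a b) :=
    rpow_neg_le_mul_rpow_neg hs hsM hM (le_max_right a b) (by
      rcases max_cases a b with h | h <;> rcases abs_cases (a - b) with h' | h' <;> linarith)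
  calc L * s ^ (-a) + L' * s ^ (-b)
      ≤ L * (M ^ |a - b| * s ^ (-max a b)) + L' * (M ^ |a - b| * s ^ (-max a b)) := by gcongr
    _ = (L + L') * M ^ |a - b| * s ^ (-max a b) := by ring

theorem diffusion_convolution_bound_general
    (T : ℝ)
    (β : ℝ) (hβ1 : β < 1/2)
    (lam bhat : ℝ) (hlam : lam < 1/2) (hbhat : bhat < 1/2)
    (L Lhat : ℝ) (hL : 0 ≤ L) (hLhat : 0 ≤ Lhat)
    (ρ : ℝ) (hρ : ρ = if 0 < L then max lam bhat else bhat) :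
    ∀ t ∈ Set.Ioc (0:ℝ) T,
      (∫⁻ s in Set.Ioc (0:ℝ) t,
          ENNReal.ofReal ((t - s) ^ (-(2*β)) * (L * s ^ (-lam) + Lhat * s ^ (-bhat)) ^ 2)) ≤
        ENNReal.ofReal ((L + Lhat) ^ 2 *
          (max T 1) ^ (2 * |lam - bhat| * (if 0 < L then (1:ℝ) else 0)) *
          Beta (1 - 2*β) (1 - 2*ρ) * t ^ (1 - 2*β - 2*ρ)) := by
  rintro t ⟨ht, htT⟩
  set ind : ℝ := if 0 < L then 1 else 0
  set M := max T 1
  have hρ_lt : ρ < 1/2 := by rw [hρ]; split_ifs; exacts [max_lt hlam hbhat, hbhat]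
  have hbound : ∀ s ∈ Ioc 0 t,
      L * s ^ (-lam) + Lhat * s ^ (-bhat) ≤ (L + Lhat) * M ^ (|lam - bhat| * ind) * s ^ (-ρ) := by
    rintro s ⟨hs, hst⟩
    by_cases hL0 : 0 < L
    · simpa [ind, hρ, hL0] using mul_rpow_neg_add_mul_rpow_neg_le hs
        (hst.trans (htT.trans (le_max_left T 1))) (le_max_right T 1) hL hLhat
    · obtain rfl : L = 0 := le_antisymm (not_lt.1 hL0) hL
      simp [ind, hρ]
  refine (lintegral_ofReal_le_of_le_mul_rpow_sub_mul_rpow (x := 1 - 2*β) (y := 1 - 2*ρ)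
    (C := (L + Lhat) ^ 2 * M ^ (2 * |lam - bhat| * ind))
    (by linarith) (by linarith) ht (by positivity) fun s hs => ?_).trans_eq ?_
  · have hs0 : 0 < s := hs.1
    have hts : 0 ≤ t - s := sub_nonneg.2 hs.2
    calc (t - s) ^ (-(2*β)) * (L * s ^ (-lam) + Lhat * s ^ (-bhat)) ^ 2
        ≤ (t - s) ^ (-(2*β)) * ((L + Lhat) * M ^ (|lam - bhat| * ind) * s ^ (-ρ)) ^ 2 := by
          gcongr
          exact hbound s hs
      _ = (L + Lhat) ^ 2 * M ^ (2 * |lam - bhat| * ind) *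
            ((t - s) ^ (1 - 2*β - 1) * s ^ (1 - 2*ρ - 1)) := by
          rw [show 2 * |lam - bhat| * ind = |lam - bhat| * ind * (2:ℕ) by push_cast; ring,
            show 1 - 2*ρ - 1 = -ρ * (2:ℕ) by push_cast; ring, rpow_mul_natCast hs0.le,
            rpow_mul_natCast (by positivity)]
          ring_nf
  · ring_nf

/-- **A priori bound for the singular diffusion (Itô isometry) convolution.**
For `T > 0`, `β ∈ [0,1/2)`, `λ, β̂ < 1/2`, `L, L̂ ≥ 0`, with
`ρ = max{λ,β̂}` if `L > 0` and `ρ = β̂` if `L = 0`, it holds for all `t ∈ (0,T]` that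
`∫_0^t (t-s)^{-2β} (L s^{-λ} + L̂ s^{-β̂})² ds
  ≤ (L + L̂)² (max{T,1})^{2|λ-β̂|·1_{(0,∞)}(L)} 𝔹(1-2β, 1-2ρ) t^{1-2β-2ρ}`. -/
theorem diffusion_convolution_bound
    (T : ℝ) (hT : 0 < T)
    (β : ℝ) (hβ0 : 0 ≤ β) (hβ1 : β < 1/2)
    (lam bhat : ℝ) (hlam : lam < 1/2) (hbhat : bhat < 1/2)
    (L Lhat : ℝ) (hL : 0 ≤ L) (hLhat : 0 ≤ Lhat)
    (ρ : ℝ) (hρ : ρ = if 0 < L then max lam bhat else bhat) :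
    ∀ t ∈ Set.Ioc (0:ℝ) T,
      (∫⁻ s in Set.Ioc (0:ℝ) t,
          ENNReal.ofReal ((t - s) ^ (-(2*β)) * (L * s ^ (-lam) + Lhat * s ^ (-bhat)) ^ 2)) ≤
        ENNReal.ofReal ((L + Lhat) ^ 2 *
          (max T 1) ^ (2 * |lam - bhat| * (if 0 < L then (1:ℝ) else 0)) *
          Beta (1 - 2*β) (1 - 2*ρ) * t ^ (1 - 2*β - 2*ρ)) :=
  diffusion_convolution_bound_general T β hβ1 lam bhat hlam hbhat L Lhat hL hLhat ρ hρ
end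
end

section
/- Let a ∈ [0,1), c ∈ (−∞,1), T ∈ (0,∞). Then it holds that limsup_{r→−∞} sup_{t∈(0,T]} [ t^{(1−a)} ∫_0^1 e^{r t s} s^{−a} (1 − s)^{−c} ds ] = 0; i.e., for every ε ∈ (0,∞) there exists R ∈ ℝ such that for all r ∈ (−∞,R] and all t ∈ (0,T] it holds that t^{(1−a)} ∫_0^1 e^{r t s} s^{−a} (1 − s)^{−c} ds ≤ ε. -/
open MeasureTheory Set

noncomputable section

set_option maxHeartbeats 1000000 in
/-- **Uniform vanishing of the exponentially weighted singular integral as `r → −∞`.**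
Let `a ∈ [0,1)`, `c < 1`, `T > 0`.  Then
`limsup_{r→−∞} sup_{t∈(0,T]} [ t^{1-a} ∫_0^1 e^{rts} s^{-a} (1-s)^{-c} ds ] = 0`,
i.e. for every `ε > 0` there exists `R ∈ ℝ` such that for all `r ≤ R` and all
`t ∈ (0,T]` one has `t^{1-a} ∫_0^1 e^{rts} s^{-a} (1-s)^{-c} ds ≤ ε`. -/
theorem exp_weighted_integral_uniformly_vanishes
    (a : ℝ) (ha0 : 0 ≤ a) (ha1 : a < 1) (c : ℝ) (hc : c < 1)
    (T : ℝ) (hT : 0 < T) :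
    ∀ ε : ℝ, 0 < ε → ∃ R : ℝ, ∀ r : ℝ, r ≤ R → ∀ t ∈ Set.Ioc (0:ℝ) T,
      t ^ (1 - a) *
        ∫ s in (0:ℝ)..1, Real.exp (r * t * s) * s ^ (-a) * (1 - s) ^ (-c) ≤ ε := by
  intro ε hε
  have h1a : (0:ℝ) < 1 - a := by linarith
  set K : ℝ := max 1 ((1/2 : ℝ) ^ (-c)) with hK
  have hK1 : (1:ℝ) ≤ K := le_max_left _ _
  have hKpos : (0:ℝ) < K := lt_of_lt_of_le one_pos hK1
  have hTpow : 0 < T ^ (1 - a) := Real.rpow_pos_of_pos hT _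
  set ε1 : ℝ := ε * (1 - a) / (3 * T ^ (1 - a) * K) with hε1
  have hε1pos : 0 < ε1 := div_pos (by positivity) (by positivity)
  set δ : ℝ := min (1/2) (ε1 ^ (1 / (1 - a))) with hδ
  have hδpos : 0 < δ := lt_min (by norm_num) (Real.rpow_pos_of_pos hε1pos _)
  have hδhalf : δ ≤ 1/2 := min_le_left _ _
  have hδ1 : δ < 1 := lt_of_le_of_lt hδhalf (by norm_num)
  have hδpow : δ ^ (1 - a) ≤ ε1 := by
    calc δ ^ (1-a) ≤ (ε1 ^ (1/(1-a))) ^ (1-a) :=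
          Real.rpow_le_rpow hδpos.le (min_le_right _ _) h1a.le
      _ = ε1 := by
          rw [← Real.rpow_mul hε1pos.le, one_div_mul_cancel h1a.ne', Real.rpow_one]
  have hM2int : IntervalIntegrable (fun s => (1-s)^(-c)) volume δ 1 := by
    have h := (intervalIntegral.intervalIntegrable_rpow'
      (show (-1:ℝ) < -c by linarith) (a := 0) (b := 1 - δ)).comp_sub_left 1
    simpa using h.symm
  set M2 : ℝ := ∫ s in δ..1, (1 - s) ^ (-c) with hM2
  have hM2nonneg : 0 ≤ M2 :=
    intervalIntegral.integral_nonneg hδ1.le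
      (fun u hu => Real.rpow_nonneg (by linarith [hu.2]) _)
  have hδa : 0 < δ ^ (-a) := Real.rpow_pos_of_pos hδpos _
  set C2 : ℝ := δ ^ (-a) * M2 + 1 with hC2
  have hC2pos : 0 < C2 := by nlinarith [mul_nonneg hδa.le hM2nonneg]
  set ε2 : ℝ := ε / (3 * C2) with hε2
  have hε2pos : 0 < ε2 := div_pos hε (by positivity)
  set η : ℝ := ε2 ^ (1 / (1 - a)) with hη
  have hηpos : 0 < η := Real.rpow_pos_of_pos hε2pos _
  have hηpow : η ^ (1 - a) = ε2 := by
    rw [hη, ← Real.rpow_mul hε2pos.le, one_div_mul_cancel h1a.ne', Real.rpow_one]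
  set C3 : ℝ := T ^ (1-a) * (δ ^ (-a) * M2) + 1 with hC3
  have hC3pos : 0 < C3 := by nlinarith [mul_nonneg hTpow.le (mul_nonneg hδa.le hM2nonneg)]
  set R : ℝ := min 0 (Real.log (ε / (3 * C3)) / (η * δ)) with hR
  refine ⟨R, ?_⟩
  intro r hr t ht
  obtain ⟨ht0, htT⟩ := ht
  have hR0 : R ≤ 0 := min_le_left _ _
  have hr0 : r ≤ 0 := hr.trans hR0
  have hrt : r * t ≤ 0 := mul_nonpos_of_nonpos_of_nonneg hr0 ht0.le
  have htpow : 0 < t ^ (1-a) := Real.rpow_pos_of_pos ht0 _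
  have htpowT : t ^ (1-a) ≤ T ^ (1-a) := Real.rpow_le_rpow ht0.le htT h1a.le
  have contδ : ContinuousOn (fun s => Real.exp (r*t*s) * (1-s)^(-c)) (Set.uIcc 0 δ) := by
    rw [Set.uIcc_of_le hδpos.le]
    apply ContinuousOn.mul
    · exact (Real.continuous_exp.comp (continuous_const.mul continuous_id)).continuousOn
    · apply ContinuousOn.rpow_const (by fun_prop)
      intro x hx
      left
      have hx2 : x ≤ δ := hx.2
      intro h
      have h1 : (1:ℝ) = x := sub_eq_zero.mp h
      linarith
  have cont1 : ContinuousOn (fun s => Real.exp (r*t*s) * s^(-a)) (Set.uIcc δ 1) := by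
    rw [Set.uIcc_of_le hδ1.le]
    apply ContinuousOn.mul
    · exact (Real.continuous_exp.comp (continuous_const.mul continuous_id)).continuousOn
    · apply ContinuousOn.rpow_const (by fun_prop)
      intro x hx
      left
      have hx1 := hx.1
      intro h; rw [h] at hx1; linarith
  have hI1 : IntervalIntegrable (fun s => Real.exp (r*t*s) * s^(-a) * (1-s)^(-c)) volume 0 δ := by
    have heq : (fun s => Real.exp (r*t*s) * s^(-a) * (1-s)^(-c))
        = fun s => s^(-a) * (Real.exp (r*t*s) * (1-s)^(-c)) := by funext s; ring
    rw [heq]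
    exact (intervalIntegral.intervalIntegrable_rpow' (by linarith)).mul_continuousOn contδ
  have hI2 : IntervalIntegrable (fun s => Real.exp (r*t*s) * s^(-a) * (1-s)^(-c)) volume δ 1 := by
    have heq : (fun s => Real.exp (r*t*s) * s^(-a) * (1-s)^(-c))
        = fun s => (1-s)^(-c) * (Real.exp (r*t*s) * s^(-a)) := by funext s; ring
    rw [heq]
    exact hM2int.mul_continuousOn cont1
  have hsplit : (∫ s in (0:ℝ)..1, Real.exp (r*t*s) * s^(-a) * (1-s)^(-c))
      = (∫ s in (0:ℝ)..δ, Real.exp (r*t*s) * s^(-a) * (1-s)^(-c))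
        + ∫ s in δ..1, Real.exp (r*t*s) * s^(-a) * (1-s)^(-c) :=
    (intervalIntegral.integral_add_adjacent_intervals hI1 hI2).symm
  have hb1 : (∫ s in (0:ℝ)..δ, Real.exp (r*t*s) * s^(-a) * (1-s)^(-c))
      ≤ K * (δ^(1-a)/(1-a)) := by
    have hgint : IntervalIntegrable (fun s : ℝ => s^(-a) * K) volume 0 δ :=
      (intervalIntegral.intervalIntegrable_rpow' (by linarith)).mul_const K
    have hpt : ∀ x ∈ Set.Icc (0:ℝ) δ,
        Real.exp (r*t*x) * x^(-a) * (1-x)^(-c) ≤ x^(-a) * K := by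
      intro x hx
      have hx0 : (0:ℝ) ≤ x := hx.1
      have hexp : Real.exp (r*t*x) ≤ 1 := by
        rw [Real.exp_le_one_iff]
        exact mul_nonpos_of_nonpos_of_nonneg hrt hx0
      have hKb : (1-x)^(-c) ≤ K := by
        rcases le_or_gt c 0 with h | h
        · calc (1-x)^(-c) ≤ 1 :=
              Real.rpow_le_one (by linarith [hx.2]) (by linarith) (by linarith)
            _ ≤ K := hK1
        · calc (1-x)^(-c) ≤ ((1:ℝ)/2)^(-c) :=
              Real.rpow_le_rpow_of_nonpos (by norm_num) (by linarith [hx.2, hδhalf]) (by linarith)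
            _ ≤ K := le_max_right _ _
      calc Real.exp (r*t*x) * x^(-a) * (1-x)^(-c)
          ≤ 1 * x^(-a) * K := by
            apply mul_le_mul _ hKb (Real.rpow_nonneg (by linarith [hx.2]) _) (by positivity)
            exact mul_le_mul_of_nonneg_right hexp (Real.rpow_nonneg hx0 _)
        _ = x^(-a) * K := by ring
    have hmono := intervalIntegral.integral_mono_on hδpos.le hI1 hgint hpt
    have hval : (∫ s in (0:ℝ)..δ, s^(-a) * K) = δ^(1-a)/(1-a) * K := by
      rw [intervalIntegral.integral_mul_const, integral_rpow (Or.inl (by linarith))]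
      rw [Real.zero_rpow (show -a + 1 ≠ 0 by intro hcon; linarith)]
      have he : -a + 1 = 1 - a := by ring
      rw [he, sub_zero]
    rw [hval] at hmono
    linarith [hmono]
  have hb2 : (∫ s in δ..1, Real.exp (r*t*s) * s^(-a) * (1-s)^(-c))
      ≤ Real.exp (r*t*δ) * δ^(-a) * M2 := by
    have hgint : IntervalIntegrable
        (fun s => Real.exp (r*t*δ) * δ^(-a) * (1-s)^(-c)) volume δ 1 := by
      have h := hM2int.const_mul (Real.exp (r*t*δ) * δ^(-a))
      simpa [mul_assoc] using h
    have hpt : ∀ x ∈ Set.Icc δ 1,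
        Real.exp (r*t*x) * x^(-a) * (1-x)^(-c)
          ≤ Real.exp (r*t*δ) * δ^(-a) * (1-x)^(-c) := by
      intro x hx
      have hx0 : (0:ℝ) < x := lt_of_lt_of_le hδpos hx.1
      have hexp : Real.exp (r*t*x) ≤ Real.exp (r*t*δ) :=
        Real.exp_le_exp.mpr (mul_le_mul_of_nonpos_left hx.1 hrt)
      have hxa : x^(-a) ≤ δ^(-a) :=
        Real.rpow_le_rpow_of_nonpos hδpos hx.1 (by linarith)
      apply mul_le_mul_of_nonneg_right _ (Real.rpow_nonneg (by linarith [hx.2]) _)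
      exact mul_le_mul hexp hxa (Real.rpow_nonneg hx0.le _) (Real.exp_pos _).le
    have hmono := intervalIntegral.integral_mono_on hδ1.le hI2 hgint hpt
    calc (∫ s in δ..1, Real.exp (r*t*s) * s^(-a) * (1-s)^(-c))
        ≤ ∫ s in δ..1, Real.exp (r*t*δ) * δ^(-a) * (1-s)^(-c) := hmono
      _ = Real.exp (r*t*δ) * δ^(-a) * M2 := by
          rw [hM2]
          exact intervalIntegral.integral_const_mul (Real.exp (r*t*δ) * δ^(-a))
            (fun s => (1-s)^(-c))
  have hnn1 : 0 ≤ ∫ s in (0:ℝ)..δ, Real.exp (r*t*s) * s^(-a) * (1-s)^(-c) := by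
    apply intervalIntegral.integral_nonneg hδpos.le
    intro u hu
    have h1 := Real.rpow_nonneg hu.1 (-a)
    have h2 := Real.rpow_nonneg (show (0:ℝ) ≤ 1 - u by linarith [hu.2]) (-c)
    positivity
  have hnn2 : 0 ≤ ∫ s in δ..1, Real.exp (r*t*s) * s^(-a) * (1-s)^(-c) := by
    apply intervalIntegral.integral_nonneg hδ1.le
    intro u hu
    have hu0 : (0:ℝ) ≤ u := le_trans hδpos.le hu.1
    have h1 := Real.rpow_nonneg hu0 (-a)
    have h2 := Real.rpow_nonneg (show (0:ℝ) ≤ 1 - u by linarith [hu.2]) (-c)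
    positivity
  have hfinal1 : t^(1-a) * (∫ s in (0:ℝ)..δ, Real.exp (r*t*s) * s^(-a) * (1-s)^(-c)) ≤ ε/3 := by
    have h1 : t^(1-a) * (∫ s in (0:ℝ)..δ, Real.exp (r*t*s) * s^(-a) * (1-s)^(-c))
        ≤ T^(1-a) * (K * (δ^(1-a)/(1-a))) :=
      mul_le_mul htpowT hb1 hnn1 hTpow.le
    have h2 : T^(1-a) * (K * (δ^(1-a)/(1-a))) ≤ T^(1-a) * (K * (ε1/(1-a))) := by gcongr
    have h3 : T^(1-a) * (K * (ε1/(1-a))) = ε/3 := by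
      rw [hε1]; field_simp
    linarith
  have hfinal2 : t^(1-a) * (∫ s in δ..1, Real.exp (r*t*s) * s^(-a) * (1-s)^(-c)) ≤ ε/3 := by
    have hmain : t^(1-a) * (∫ s in δ..1, Real.exp (r*t*s) * s^(-a) * (1-s)^(-c))
        ≤ t^(1-a) * (Real.exp (r*t*δ) * δ^(-a) * M2) :=
      mul_le_mul_of_nonneg_left hb2 htpow.le
    rcases le_total t η with hcase | hcase
    · have htε2 : t^(1-a) ≤ ε2 := by
        rw [← hηpow]; exact Real.rpow_le_rpow ht0.le hcase h1a.le
      have hexp1 : Real.exp (r*t*δ) ≤ 1 := by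
        rw [Real.exp_le_one_iff]
        exact mul_nonpos_of_nonpos_of_nonneg hrt hδpos.le
      have hstep : t^(1-a) * (Real.exp (r*t*δ) * δ^(-a) * M2) ≤ ε2 * (δ^(-a) * M2) := by
        have hinner : Real.exp (r*t*δ) * δ^(-a) * M2 ≤ δ^(-a) * M2 := by
          have := mul_le_mul_of_nonneg_right
            (mul_le_mul_of_nonneg_right hexp1 hδa.le) hM2nonneg
          linarith [this]
        exact mul_le_mul htε2 hinner (by positivity) hε2pos.le
      have hC2b : ε2 * (δ^(-a) * M2) ≤ ε2 * C2 :=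
        mul_le_mul_of_nonneg_left (by rw [hC2]; linarith) hε2pos.le
      have hC2e : ε2 * C2 = ε/3 := by
        rw [hε2]; field_simp
      linarith
    · have hηδ : 0 < η * δ := mul_pos hηpos hδpos
      have hv : 0 < ε / (3 * C3) := div_pos hε (by positivity)
      have hlog : R * η * δ ≤ Real.log (ε / (3 * C3)) := by
        have hRle : R ≤ Real.log (ε / (3 * C3)) / (η * δ) := min_le_right _ _
        calc R * η * δ = R * (η * δ) := by ring
          _ ≤ (Real.log (ε / (3 * C3)) / (η * δ)) * (η * δ) :=
              mul_le_mul_of_nonneg_right hRle hηδ.le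
          _ = Real.log (ε / (3 * C3)) := div_mul_cancel₀ _ hηδ.ne'
      have hord : r * t * δ ≤ R * η * δ := by
        have h1 : r * t ≤ r * η := mul_le_mul_of_nonpos_left hcase hr0
        have h2 : r * t * δ ≤ r * η * δ := mul_le_mul_of_nonneg_right h1 hδpos.le
        have h3 : r * η ≤ R * η := mul_le_mul_of_nonneg_right hr hηpos.le
        have h4 : r * η * δ ≤ R * η * δ := mul_le_mul_of_nonneg_right h3 hδpos.le
        linarith
      have hexpR : Real.exp (r*t*δ) ≤ ε / (3 * C3) := by
        calc Real.exp (r*t*δ) ≤ Real.exp (Real.log (ε / (3 * C3))) :=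
              Real.exp_le_exp.mpr (hord.trans hlog)
          _ = ε / (3 * C3) := Real.exp_log hv
      have hchain : t^(1-a) * (Real.exp (r*t*δ) * δ^(-a) * M2) ≤ ε/3 := by
        have hXnn : 0 ≤ δ^(-a) * M2 := mul_nonneg hδa.le hM2nonneg
        calc t^(1-a) * (Real.exp (r*t*δ) * δ^(-a) * M2)
            = Real.exp (r*t*δ) * (t^(1-a) * (δ^(-a) * M2)) := by ring
          _ ≤ (ε / (3 * C3)) * (T^(1-a) * (δ^(-a) * M2)) :=
              mul_le_mul hexpR (mul_le_mul_of_nonneg_right htpowT hXnn)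
                (mul_nonneg htpow.le hXnn) hv.le
          _ ≤ (ε / (3 * C3)) * C3 :=
              mul_le_mul_of_nonneg_left (by rw [hC3]; linarith) hv.le
          _ = ε/3 := by field_simp
      linarith
  rw [hsplit, mul_add]
  linarith
end
end

section
/- Let (H, ‖·‖_H, ⟨·,·⟩_H) be a separable ℝ-Hilbert space containing more than one element, let 𝔹 ⊆ H be an orthonormal basis of H, let (Ω, F, P) be a probability space, let T ∈ (0,∞), η, δ ∈ ℝ, let λ : 𝔹 → ℝ satisfy sup_{b∈𝔹} (−λ_b) < η, let A : D(A) ⊆ H → H be the diagonal linear operator with D(A) = { v ∈ H : Σ_{b∈𝔹} |λ_b ⟨b,v⟩_H|^2 < ∞ } and A v = −Σ_{b∈𝔹} λ_b ⟨b,v⟩_H b for v ∈ D(A), let (H_r, ‖·‖_{H_r})_{r∈ℝ} be the family of interpolation spaces associated to η − A (described concretely in the context below), let w ∈ H, b_0 ∈ 𝔹, ξ : Ω → H_δ be F/B(H_δ)-measurable, and let F : H → H satisfy ⟨b_0, w⟩_H > 0, w = ⟨b_0, w⟩_H b_0, and F(v) = ‖v‖_H w for all v ∈ H. Let X : [0,T]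 × Ω → H_δ be B([0,T]) ⊗ F / B(H_δ)-measurable with X((0,T] × Ω) ⊆ H such that for every t ∈ (0,T] it holds P-a.s. that ∫_0^t ‖ e^{(t−s)A} F(X_s) ‖_{H_δ} ds < ∞ and P-a.s. that X_t = e^{tA} ξ + ∫_0^t e^{(t−s)A} F(X_s) ds (Bochner integral in H_δ). Then for all t ∈ (0,T] it holds that P( ξ ∈ H_{−1} ) = 1 and P-a.s. that ⟨b_0, w⟩_H · e^{−(λ_{b_0} + |η|) t} · [ 1 − e^{−( inf_{b∈𝔹} λ_b + η ) t} ] · ‖ ξ − ⟨b_0, ξ⟩ b_0 ‖_{H_{−1}} ≤ ⟨ b_0, X_t − e^{tA} ξ ⟩_H ≤ ‖ X_t − e^{tA} ξ ‖_H < ∞. -/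
open MeasureTheory Set
open scoped ENNReal Classical

noncomputable section

/-- The squared `H_r`-norm, in the concrete coefficient realization of the interpolation
spaces associated to `η - A` for the diagonal operator `A` with eigenvalues `-λ_b`:
`‖c‖_{H_r}² = Σ_b (η + λ_b)^{2r} |c_b|²` (valued in `[0,∞]`). -/
def HNormSq {ι : Type*} (η : ℝ) (lam : ι → ℝ) (r : ℝ) (c : ι → ℝ) : ℝ≥0∞ :=
  ∑' b : ι, ENNReal.ofReal ((η + lam b) ^ (2 * r) * (c b) ^ 2)

/-- The `H_r`-norm `‖c‖_{H_r} = (Σ_b (η + λ_b)^{2r} |c_b|²)^{1/2}` as a real number. -/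
def HNorm {ι : Type*} (η : ℝ) (lam : ι → ℝ) (r : ℝ) (c : ι → ℝ) : ℝ :=
  Real.sqrt (HNormSq η lam r c).toReal

/-!
Since `w` is supported on `b₀`, every coordinate `b ≠ b₀` of the mild solution follows the
linear flow, `X_s(b) = e^{-λ_b s} ξ_b`, for almost every `(ω, s)` (Fubini), while the
`b₀`-coordinate of `X_t - e^{tA} ξ` equals `w_{b₀} ∫_0^t e^{-λ_{b₀}(t-s)} ‖X_s‖_H ds`.
Bounding `‖X_s‖_H` below by `‖e^{sA} ξ^⊥‖_H`, where `ξ^⊥ = ξ - ⟨b₀,ξ⟩ b₀`, and testing against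
unit vectors supported on finitely many coordinates, the kernel estimate
`∫_0^t e^{-λ_{b₀}(t-s)} e^{-λ_b s} ds ≥ e^{-(λ_{b₀}+|η|)t} (1 - e^{-(inf λ + η)t}) / (η + λ_b)`
turns this integral into an upper bound for `‖ξ^⊥‖_{H_{-1}}`. As the integral is finite, this
forces `ξ ∈ H_{-1}` almost surely.
-/

open Real

section HNorm

variable {ι : Type*} {η : ℝ} {lam : ι → ℝ} {r : ℝ}

lemma hNorm_nonneg (c : ι → ℝ) : 0 ≤ HNorm η lam r c := sqrt_nonneg _

lemma hNormSq_eq_of_eq_zero_off {v : ι → ℝ} {b₀ : ι} (hv : ∀ b, b ≠ b₀ → v b = 0) :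
    HNormSq η lam r v = ENNReal.ofReal ((η + lam b₀) ^ (2 * r) * v b₀ ^ 2) :=
  tsum_eq_single b₀ fun b hb => by simp [hv b hb]

lemma hNorm_eq_of_eq_zero_off {v : ι → ℝ} {b₀ : ι} (hb₀ : 0 < η + lam b₀)
    (hv : ∀ b, b ≠ b₀ → v b = 0) : HNorm η lam r v = (η + lam b₀) ^ r * |v b₀| := by
  have hsq : (η + lam b₀) ^ (2 * r) * v b₀ ^ 2 = ((η + lam b₀) ^ r * |v b₀|) ^ 2 := by
    rw [mul_pow, sq_abs, mul_comm (2 : ℝ) r, rpow_mul hb₀.le, rpow_two]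
  rw [HNorm, hNormSq_eq_of_eq_zero_off hv, hsq, ENNReal.toReal_ofReal (sq_nonneg _),
    sqrt_sq (by positivity)]

lemma hNormSq_mono {c d : ι → ℝ} (h : ∀ b, c b ^ 2 ≤ d b ^ 2) :
    HNormSq η lam r c ≤ HNormSq η lam r d := by
  refine ENNReal.tsum_le_tsum fun b => ?_
  rcases le_or_gt 0 ((η + lam b) ^ (2 * r)) with hw | hw
  · exact ENNReal.ofReal_le_ofReal (mul_le_mul_of_nonneg_left (h b) hw)
  · rw [ENNReal.ofReal_of_nonpos (mul_nonpos_of_nonpos_of_nonneg hw.le (sq_nonneg _))]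
    exact zero_le

lemma hNorm_mono {c d : ι → ℝ} (h : ∀ b, c b ^ 2 ≤ d b ^ 2) (hd : HNormSq η lam r d < ⊤) :
    HNorm η lam r c ≤ HNorm η lam r d :=
  sqrt_le_sqrt (ENNReal.toReal_mono hd.ne (hNormSq_mono h))

lemma hNorm_le_of_hNormSq_le {c : ι → ℝ} {M : ℝ} (hM : 0 ≤ M)
    (h : HNormSq η lam r c ≤ ENNReal.ofReal (M ^ 2)) : HNorm η lam r c ≤ M :=
  sqrt_le_iff.2 ⟨hM, ENNReal.toReal_le_of_le_ofReal (sq_nonneg M) h⟩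

lemma hNormSq_zero_eq (c : ι → ℝ) : HNormSq η lam 0 c = ∑' b, ENNReal.ofReal (c b ^ 2) := by
  simp [HNormSq]

lemma hNormSq_neg_one_eq (c : ι → ℝ) :
    HNormSq η lam (-1) c = ∑' b, ENNReal.ofReal ((c b / (η + lam b)) ^ 2) := by
  refine tsum_congr fun b => ?_
  rw [show (2 * (-1) : ℝ) = ((-2 : ℤ) : ℝ) by norm_num, rpow_intCast, div_pow, zpow_neg,
    div_eq_inv_mul]
  norm_cast

lemma hNormSq_lt_top_of_ite_lt_top {c : ι → ℝ} (b₀ : ι)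
    (h : HNormSq η lam r (fun b => if b = b₀ then 0 else c b) < ⊤) : HNormSq η lam r c < ⊤ := by
  rw [HNormSq, ENNReal.tsum_eq_add_tsum_ite b₀]
  refine ENNReal.add_lt_top.2 ⟨ENNReal.ofReal_lt_top, lt_of_le_of_lt (le_of_eq ?_) h⟩
  rw [HNormSq]
  exact tsum_congr fun b => by split_ifs <;> simp

lemma sum_mul_le_hNorm_zero {c : ι → ℝ} (hc : HNormSq η lam 0 c < ⊤) {J : Finset ι}
    {u : ι → ℝ} (hu : ∑ b ∈ J, u b ^ 2 ≤ 1) : ∑ b ∈ J, u b * c b ≤ HNorm η lam 0 c := by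
  have hJ : ∑ b ∈ J, c b ^ 2 ≤ (HNormSq η lam 0 c).toReal := by
    rw [hNormSq_zero_eq] at hc ⊢
    rw [← ENNReal.toReal_ofReal (Finset.sum_nonneg fun b _ => sq_nonneg (c b)),
      ENNReal.ofReal_sum_of_nonneg fun b _ => sq_nonneg (c b)]
    exact ENNReal.toReal_mono hc.ne (ENNReal.sum_le_tsum J)
  refine (le_abs_self _).trans (abs_le_sqrt ?_)
  calc (∑ b ∈ J, u b * c b) ^ 2 ≤ (∑ b ∈ J, u b ^ 2) * ∑ b ∈ J, c b ^ 2 :=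
        Finset.sum_mul_sq_le_sq_mul_sq J u c
    _ ≤ 1 * (HNormSq η lam 0 c).toReal := by gcongr
    _ = _ := one_mul _

lemma tsum_ofReal_sq_le_of_forall_sum_mul_le {a : ι → ℝ} {M : ℝ}
    (h : ∀ (J : Finset ι) (u : ι → ℝ), ∑ b ∈ J, u b ^ 2 ≤ 1 → (∀ b ∈ J, 0 ≤ u b * a b) →
      ∑ b ∈ J, u b * a b ≤ M) :
    ∑' b, ENNReal.ofReal (a b ^ 2) ≤ ENNReal.ofReal (M ^ 2) := by
  rw [ENNReal.tsum_eq_iSup_sum]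
  refine iSup_le fun J => ?_
  set S := ∑ b ∈ J, a b ^ 2
  have hS : 0 ≤ S := Finset.sum_nonneg fun b _ => sq_nonneg (a b)
  -- test against `a / ‖a‖`, which is `0` when `a` vanishes on `J`
  have hpair : ∑ b ∈ J, a b / √S * a b = √S := by
    simp_rw [div_mul_eq_mul_div, ← sq, ← Finset.sum_div]
    exact div_sqrt
  have hM := h J (fun b => a b / √S) ?_ ?_
  · rw [← ENNReal.ofReal_sum_of_nonneg fun b _ => sq_nonneg (a b)]
    exact ENNReal.ofReal_le_ofReal (sqrt_le_iff.1 (hpair ▸ hM)).2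
  · simp_rw [div_pow, sq_sqrt hS, ← Finset.sum_div]
    exact div_self_le_one S
  · exact fun b _ => by rw [div_mul_eq_mul_div, ← sq]; positivity

end HNorm

section Measurability

variable {ι Ω : Type*} [Countable ι] [MeasurableSpace Ω] {η r : ℝ} {lam : ι → ℝ}

lemma measurable_hNormSq {f : Ω → ι → ℝ} (hf : Measurable f) :
    Measurable fun ω => HNormSq η lam r (f ω) :=
  Measurable.tsum fun b => by fun_prop

lemma measurable_hNorm {f : Ω → ι → ℝ} (hf : Measurable f) :
    Measurable fun ω => HNorm η lam r (f ω) :=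
  (measurable_hNormSq hf).ennreal_toReal.sqrt

lemma exists_measurable_eq_on_Icc {β : Type*} [MeasurableSpace β] {T : ℝ} (hT : 0 ≤ T)
    {X : ℝ → Ω → β} (hX : Measurable fun q : Icc 0 T × Ω => X q.1 q.2) :
    ∃ Y : ℝ × Ω → β, Measurable Y ∧ ∀ s ∈ Icc 0 T, ∀ ω, Y (s, ω) = X s ω :=
  ⟨fun q => X (projIcc 0 T hT q.1) q.2,
    hX.comp (((continuous_projIcc (h := hT)).measurable.comp measurable_fst).prodMk
      measurable_snd),
    fun s hs ω => by simp only [projIcc_of_mem hT hs]⟩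

variable {S : Set ℝ} {Y : ℝ × Ω → ι → ℝ} {X : ℝ → Ω → ι → ℝ}

lemma aestronglyMeasurable_hNorm_of_eqOn (hY : Measurable Y) (hS : MeasurableSet S)
    (hYX : ∀ s ∈ S, ∀ ω, Y (s, ω) = X s ω) (ω : Ω) :
    AEStronglyMeasurable (fun s => HNorm η lam r (X s ω)) (volume.restrict S) := by
  have hYω : Measurable fun s => Y (s, ω) := hY.comp (measurable_id.prodMk measurable_const)
  refine (measurable_hNorm (η := η) (lam := lam) (r := r) hYω).aestronglyMeasurable.congr ?_
  filter_upwards [ae_restrict_mem hS] with s hs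
  rw [hYX s hs]

lemma ae_ae_eq_exp_mul_off {P : Measure Ω} [SFinite P] {b₀ : ι} {ξ : Ω → ι → ℝ}
    (hξ : Measurable ξ) (hY : Measurable Y) (hS : MeasurableSet S)
    (hYX : ∀ s ∈ S, ∀ ω, Y (s, ω) = X s ω)
    (h : ∀ s ∈ S, ∀ᵐ ω ∂P, ∀ b, b ≠ b₀ → X s ω b = exp (-lam b * s) * ξ ω b) :
    ∀ᵐ ω ∂P, ∀ᵐ s ∂volume.restrict S, ∀ b, b ≠ b₀ → X s ω b = exp (-lam b * s) * ξ ω b := by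
  have hmeas : MeasurableSet {q : Ω × ℝ |
      ∀ b, b ≠ b₀ → Y (q.2, q.1) b = exp (-lam b * q.2) * ξ q.1 b} := by
    refine measurableSet_setOfPred.2 (Measurable.forall fun b => measurable_const.imp ?_)
    exact measurableSet_setOfPred.1 (measurableSet_eq_fun (by fun_prop) (by fun_prop))
  have hslice : ∀ s ∈ S, ∀ᵐ ω ∂P, ∀ b, b ≠ b₀ → Y (s, ω) b = exp (-lam b * s) * ξ ω b :=
    fun s hs => (h s hs).mono fun ω hω => by rwa [hYX s hs]
  filter_upwards [(Measure.ae_ae_comm (μ := P) (ν := volume.restrict S) hmeas).2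
    (ae_restrict_of_forall_mem hS hslice)] with ω hω
  filter_upwards [hω, ae_restrict_mem hS] with s hs hmem
  rwa [← hYX s hmem]

end Measurability

lemma setIntegral_exp_neg_mul {c t : ℝ} (hc : c ≠ 0) (ht : 0 ≤ t) :
    ∫ s in Ioc 0 t, exp (-c * s) = (1 - exp (-c * t)) / c := by
  rw [← intervalIntegral.integral_of_le ht,
    intervalIntegral.integral_comp_mul_left (fun x => exp x) (neg_ne_zero.2 hc), integral_exp,
    mul_zero, exp_zero, smul_eq_mul, div_eq_mul_inv]
  ring

lemma le_setIntegral_exp_mul_exp {a₀ a l η t : ℝ} (ht : 0 < t) (ha₀ : 0 < a₀ + η) (hl : l ≤ a)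
    (hlη : 0 < l + η) :
    exp (-(a₀ + |η|) * t) * (1 - exp (-(l + η) * t)) / (η + a) ≤
      ∫ s in Ioc 0 t, exp (-a₀ * (t - s)) * exp (-a * s) := by
  have ha : 0 < a + η := by linarith
  have hdecay : exp (-(a + η) * t) ≤ exp (-(l + η) * t) := exp_le_exp.2 (by nlinarith)
  have hgap : 0 ≤ 1 - exp (-(l + η) * t) := by
    have : exp (-(l + η) * t) ≤ 1 := exp_le_one_iff.2 (by nlinarith)
    linarith
  calc exp (-(a₀ + |η|) * t) * (1 - exp (-(l + η) * t)) / (η + a)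
      ≤ exp (-a₀ * t) * (1 - exp (-(a + η) * t)) / (a + η) := by
        rw [add_comm η a]
        gcongr
        · nlinarith [abs_nonneg η]
    _ = ∫ s in Ioc 0 t, exp (-a₀ * t) * exp (-(a + η) * s) := by
        rw [integral_const_mul, setIntegral_exp_neg_mul ha.ne' ht.le, mul_div_assoc]
    -- `e^{-a₀(t-s)} e^{-as} = e^{-a₀t} e^{(a₀+η)s} e^{-(a+η)s}` and `(a₀+η)s ≥ 0`
    _ ≤ ∫ s in Ioc 0 t, exp (-a₀ * (t - s)) * exp (-a * s) := by
        refine setIntegral_mono_on ?_ ?_ measurableSet_Ioc fun s hs => ?_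
        · exact Continuous.integrableOn_Ioc (by fun_prop)
        · exact Continuous.integrableOn_Ioc (by fun_prop)
        rw [← exp_add, ← exp_add]
        exact exp_le_exp.2 (by nlinarith [hs.1])

lemma iInf_eq_neg_sSup_range_neg {ι : Type*} (f : ι → ℝ) :
    ⨅ b, f b = -sSup (range fun b => -f b) := by
  have h := Real.iInf_mul_of_nonpos (by norm_num : (-1 : ℝ) ≤ 0) f
  simp only [mul_neg_one] at h
  rw [← neg_neg (⨅ b, f b), h]
  rfl

lemma exp_mul_one_sub_exp_pos {a l η t : ℝ} (ht : 0 < t) (hlη : 0 < l + η) :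
    0 < exp (-(a + |η|) * t) * (1 - exp (-(l + η) * t)) :=
  mul_pos (exp_pos _) (sub_pos.2 (exp_lt_one_iff.2 (by nlinarith)))

section Barrier

variable {ι : Type*} {η l t : ℝ} {lam : ι → ℝ} {b₀ : ι} {ξ : ι → ℝ}

lemma sum_mul_exp_perp_le_hNorm {y : ι → ℝ} {s : ℝ} (hy : HNormSq η lam 0 y < ⊤)
    (hperp : ∀ b, b ≠ b₀ → y b = exp (-lam b * s) * ξ b) {J : Finset ι} {u : ι → ℝ}
    (hu : ∑ b ∈ J, u b ^ 2 ≤ 1) :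
    ∑ b ∈ J, u b * (exp (-lam b * s) * if b = b₀ then 0 else ξ b) ≤ HNorm η lam 0 y := by
  have hle : ∀ b, (exp (-lam b * s) * if b = b₀ then 0 else ξ b) ^ 2 ≤ y b ^ 2 := fun b => by
    split_ifs with h
    · simpa using sq_nonneg (y b)
    · rw [hperp b h]
  exact (sum_mul_le_hNorm_zero ((hNormSq_mono hle).trans_lt hy) hu).trans (hNorm_mono hle hy)

theorem hNormSq_neg_one_perp_le {x : ℝ → ι → ℝ} (hl : ∀ b, l ≤ lam b) (hlη : 0 < l + η)
    (ht : 0 < t)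
    (hx : ∀ᵐ s ∂volume.restrict (Ioc 0 t),
      HNormSq η lam 0 (x s) < ⊤ ∧ ∀ b, b ≠ b₀ → x s b = exp (-lam b * s) * ξ b)
    (hint : IntegrableOn (fun s => exp (-lam b₀ * (t - s)) * HNorm η lam 0 (x s)) (Ioc 0 t)) :
    HNormSq η lam (-1) (fun b => if b = b₀ then 0 else ξ b) ≤
      ENNReal.ofReal (((∫ s in Ioc 0 t, exp (-lam b₀ * (t - s)) * HNorm η lam 0 (x s)) /
        (exp (-(lam b₀ + |η|) * t) * (1 - exp (-(l + η) * t)))) ^ 2) := by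
  set ξ' : ι → ℝ := fun b => if b = b₀ then 0 else ξ b
  set K := exp (-(lam b₀ + |η|) * t) * (1 - exp (-(l + η) * t))
  have hpos : ∀ b, 0 < η + lam b := fun b => by linarith [hl b]
  have hK : 0 < K := exp_mul_one_sub_exp_pos ht hlη
  rw [hNormSq_neg_one_eq]
  refine tsum_ofReal_sq_le_of_forall_sum_mul_le fun J u hu hua => ?_
  rw [le_div_iff₀ hK]
  have hsign : ∀ b ∈ J, 0 ≤ u b * ξ' b := fun b hb => by
    have h := mul_nonneg (hua b hb) (hpos b).le
    rwa [mul_div_assoc', div_mul_cancel₀ _ (hpos b).ne'] at h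
  calc (∑ b ∈ J, u b * (ξ' b / (η + lam b))) * K
      = ∑ b ∈ J, u b * ξ' b * (K / (η + lam b)) := by
        rw [Finset.sum_mul]
        exact Finset.sum_congr rfl fun b _ => by ring
    _ ≤ ∑ b ∈ J, u b * ξ' b * ∫ s in Ioc 0 t, exp (-lam b₀ * (t - s)) * exp (-lam b * s) :=
        Finset.sum_le_sum fun b hb => mul_le_mul_of_nonneg_left
          (le_setIntegral_exp_mul_exp ht (by linarith [hl b₀]) (hl b) hlη) (hsign b hb)
    _ = ∫ s in Ioc 0 t, exp (-lam b₀ * (t - s)) *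
          ∑ b ∈ J, u b * (exp (-lam b * s) * ξ' b) := by
        simp_rw [← integral_const_mul]
        rw [← integral_finsetSum _ fun b _ => Continuous.integrableOn_Ioc (by fun_prop)]
        refine setIntegral_congr_fun measurableSet_Ioc fun s _ => ?_
        rw [Finset.mul_sum]
        exact Finset.sum_congr rfl fun b _ => by ring
    _ ≤ ∫ s in Ioc 0 t, exp (-lam b₀ * (t - s)) * HNorm η lam 0 (x s) := by
        refine integral_mono_ae (Continuous.integrableOn_Ioc (by fun_prop)) hint ?_
        filter_upwards [hx] with s hs
        exact mul_le_mul_of_nonneg_left (sum_mul_exp_perp_le_hNorm hs.1 hs.2 hu) (exp_pos _).le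


lemma eq_exp_mul_of_mild_of_eq_zero {x : ℝ → ι → ℝ} {w : ι → ℝ} {b : ι} (hwb : w b = 0)
    (heq : x t b = exp (-lam b * t) * ξ b +
      ∫ s in Ioc 0 t, exp (-lam b * (t - s)) * HNorm η lam 0 (x s) * w b) :
    x t b = exp (-lam b * t) * ξ b := by
  simpa [hwb] using heq

lemma integrableOn_exp_mul_hNorm {δ : ℝ} {w : ι → ℝ} {x : ℝ → ι → ℝ} (hb₀ : 0 < η + lam b₀)
    (hw_pos : 0 < w b₀) (hw_supp : ∀ b, b ≠ b₀ → w b = 0)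
    (hmeas : AEStronglyMeasurable (fun s => HNorm η lam 0 (x s)) (volume.restrict (Ioc 0 t)))
    (hint : ∫⁻ s in Ioc 0 t, ENNReal.ofReal (HNorm η lam δ
      (fun b => exp (-lam b * (t - s)) * (HNorm η lam 0 (x s) * w b))) < ⊤) :
    IntegrableOn (fun s => exp (-lam b₀ * (t - s)) * HNorm η lam 0 (x s)) (Ioc 0 t) := by
  set C := (η + lam b₀) ^ δ * w b₀
  have hC : 0 < C := mul_pos (rpow_pos_of_pos hb₀ δ) hw_pos
  have hnonneg : ∀ s, 0 ≤ exp (-lam b₀ * (t - s)) * HNorm η lam 0 (x s) := fun s =>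
    mul_nonneg (exp_pos _).le (hNorm_nonneg _)
  have hδ : ∀ s, HNorm η lam δ (fun b => exp (-lam b * (t - s)) * (HNorm η lam 0 (x s) * w b)) =
      C * (exp (-lam b₀ * (t - s)) * HNorm η lam 0 (x s)) := fun s => by
    rw [hNorm_eq_of_eq_zero_off hb₀ fun b hb => by rw [hw_supp b hb, mul_zero, mul_zero],
      ← mul_assoc, abs_of_nonneg (mul_nonneg (hnonneg s) hw_pos.le)]
    ring
  simp_rw [hδ] at hint
  refine (integrable_const_mul_iff hC.ne'.isUnit _).1 ⟨?_, ?_⟩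
  · exact (((by fun_prop : Continuous fun s => exp (-lam b₀ * (t - s))).aestronglyMeasurable.mul
      hmeas).const_mul C)
  · exact (hasFiniteIntegral_iff_ofReal (ae_of_all _ fun s => mul_nonneg hC.le (hnonneg s))).2 hint

theorem barrier_of_mild_path {δ : ℝ} {w : ι → ℝ} {x : ℝ → ι → ℝ}
    (hl : ∀ b, l ≤ lam b) (hlη : 0 < l + η) (ht : 0 < t)
    (hw_pos : 0 < w b₀) (hw_supp : ∀ b, b ≠ b₀ → w b = 0)
    (hx_H : ∀ s ∈ Ioc 0 t, HNormSq η lam 0 (x s) < ⊤)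
    (hperp : ∀ᵐ s ∂volume.restrict (Ioc 0 t), ∀ b, b ≠ b₀ → x s b = exp (-lam b * s) * ξ b)
    (hmeas : AEStronglyMeasurable (fun s => HNorm η lam 0 (x s)) (volume.restrict (Ioc 0 t)))
    (hint : ∫⁻ s in Ioc 0 t, ENNReal.ofReal (HNorm η lam δ
      (fun b => exp (-lam b * (t - s)) * (HNorm η lam 0 (x s) * w b))) < ⊤)
    (heq : ∀ b, x t b = exp (-lam b * t) * ξ b +
      ∫ s in Ioc 0 t, exp (-lam b * (t - s)) * HNorm η lam 0 (x s) * w b) :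
    HNormSq η lam (-1) ξ < ⊤ ∧
      (w b₀ * exp (-(lam b₀ + |η|) * t) * (1 - exp (-(l + η) * t)) *
          HNorm η lam (-1) (fun b => if b = b₀ then 0 else ξ b) ≤
        x t b₀ - exp (-lam b₀ * t) * ξ b₀) ∧
      (x t b₀ - exp (-lam b₀ * t) * ξ b₀ ≤
        HNorm η lam 0 (fun b => x t b - exp (-lam b * t) * ξ b)) ∧
      HNormSq η lam 0 (fun b => x t b - exp (-lam b * t) * ξ b) < ⊤ := by
  have hb₀ : 0 < η + lam b₀ := by linarith [hl b₀]
  have hK := exp_mul_one_sub_exp_pos (a := lam b₀) ht hlη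
  have hI := integrableOn_exp_mul_hNorm hb₀ hw_pos hw_supp hmeas hint
  have hI₀ : 0 ≤ ∫ s in Ioc 0 t, exp (-lam b₀ * (t - s)) * HNorm η lam 0 (x s) :=
    setIntegral_nonneg measurableSet_Ioc fun s _ => mul_nonneg (exp_pos _).le (hNorm_nonneg _)
  have hsq := hNormSq_neg_one_perp_le hl hlη ht (by
    filter_upwards [hperp, ae_restrict_mem measurableSet_Ioc] with s hs hmem
    exact ⟨hx_H s hmem, hs⟩) hI
  have hdiff : x t b₀ - exp (-lam b₀ * t) * ξ b₀ =
      w b₀ * ∫ s in Ioc 0 t, exp (-lam b₀ * (t - s)) * HNorm η lam 0 (x s) := by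
    rw [heq b₀, integral_mul_const]
    ring
  have hdiff_off : ∀ b, b ≠ b₀ → x t b - exp (-lam b * t) * ξ b = 0 := fun b hb =>
    sub_eq_zero.2 (eq_exp_mul_of_mild_of_eq_zero (hw_supp b hb) (heq b))
  refine ⟨hNormSq_lt_top_of_ite_lt_top b₀ (hsq.trans_lt ENNReal.ofReal_lt_top), ?_, ?_, ?_⟩
  · rw [hdiff, mul_assoc (w b₀), mul_assoc (w b₀)]
    exact mul_le_mul_of_nonneg_left
      ((le_div_iff₀' hK).1 (hNorm_le_of_hNormSq_le (div_nonneg hI₀ hK.le) hsq)) hw_pos.le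
  · rw [hNorm_eq_of_eq_zero_off hb₀ hdiff_off, rpow_zero, one_mul]
    exact le_abs_self _
  · rw [hNormSq_eq_of_eq_zero_off hdiff_off]
    exact ENNReal.ofReal_lt_top

end Barrier

theorem nonlinear_heat_regularity_barrier_general
    {ι : Type*} [Countable ι]
    {Ω : Type*} [MeasurableSpace Ω] (P : Measure Ω) [IsProbabilityMeasure P]
    (T : ℝ) (η δ : ℝ)
    (lam : ι → ℝ)
    (h_bdd : BddAbove (Set.range fun b => -lam b))
    (h_sup : sSup (Set.range fun b => -lam b) < η)
    (w : ι → ℝ) (b₀ : ι)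
    (hw_pos : 0 < w b₀)
    (hw_supp : ∀ b : ι, b ≠ b₀ → w b = 0)
    (ξ : Ω → ι → ℝ) (hξ_meas : Measurable ξ)
    (X : ℝ → Ω → ι → ℝ)
    (hX_meas : Measurable (fun q : Set.Icc (0:ℝ) T × Ω => X (q.1 : ℝ) q.2))
    (hX_H : ∀ t ∈ Set.Ioc (0:ℝ) T, ∀ ω : Ω, HNormSq η lam 0 (X t ω) < ⊤)
    (hX_int : ∀ t ∈ Set.Ioc (0:ℝ) T, ∀ᵐ ω ∂P,
      (∫⁻ s in Set.Ioc (0:ℝ) t,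
        ENNReal.ofReal (HNorm η lam δ
          (fun b => Real.exp (-lam b * (t - s)) *
            (HNorm η lam 0 (X s ω) * w b)))) < ⊤)
    (hX_eq : ∀ t ∈ Set.Ioc (0:ℝ) T, ∀ᵐ ω ∂P, ∀ b : ι,
      X t ω b = Real.exp (-lam b * t) * ξ ω b +
        ∫ s in Set.Ioc (0:ℝ) t,
          Real.exp (-lam b * (t - s)) * HNorm η lam 0 (X s ω) * w b) :
    ∀ t ∈ Set.Ioc (0:ℝ) T,
      P {ω | HNormSq η lam (-1) (ξ ω) < ⊤} = 1 ∧
      ∀ᵐ ω ∂P,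
        (w b₀ * Real.exp (-(lam b₀ + |η|) * t) *
            (1 - Real.exp (-((⨅ b, lam b) + η) * t)) *
            HNorm η lam (-1) (fun b => if b = b₀ then 0 else ξ ω b) ≤
          X t ω b₀ - Real.exp (-lam b₀ * t) * ξ ω b₀) ∧
        (X t ω b₀ - Real.exp (-lam b₀ * t) * ξ ω b₀ ≤
          HNorm η lam 0 (fun b => X t ω b - Real.exp (-lam b * t) * ξ ω b)) ∧
        HNormSq η lam 0 (fun b => X t ω b - Real.exp (-lam b * t) * ξ ω b) < ⊤ := by
  intro t ht
  have hsub : Ioc 0 t ⊆ Ioc 0 T := Ioc_subset_Ioc_right ht.2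
  have hl : ∀ b, (⨅ b, lam b) ≤ lam b := fun b => by
    rw [iInf_eq_neg_sSup_range_neg]
    linarith [le_csSup h_bdd ⟨b, rfl⟩]
  have hlη : 0 < (⨅ b, lam b) + η := by
    rw [iInf_eq_neg_sSup_range_neg]
    linarith
  obtain ⟨Y, hY, hYX⟩ := exists_measurable_eq_on_Icc (ht.1.le.trans ht.2) hX_meas
  have hYX' : ∀ s ∈ Ioc 0 t, ∀ ω, Y (s, ω) = X s ω := fun s hs =>
    hYX s (Ioc_subset_Icc_self (hsub hs))
  have hperp := ae_ae_eq_exp_mul_off hξ_meas hY measurableSet_Ioc hYX' fun s hs =>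
    (hX_eq s (hsub hs)).mono fun ω h b hb =>
      eq_exp_mul_of_mild_of_eq_zero (x := fun s => X s ω) (hw_supp b hb) (h b)
  have hbarrier := (hperp.and ((hX_int t ht).and (hX_eq t ht))).mono fun ω ⟨hperp, hint, heq⟩ =>
    barrier_of_mild_path hl hlη ht.1 hw_pos hw_supp (fun s hs => hX_H s (hsub hs) ω) hperp
      (aestronglyMeasurable_hNorm_of_eqOn hY measurableSet_Ioc hYX' ω) hint heq
  exact ⟨(mem_ae_iff_prob_eq_one (measurableSet_lt (measurable_hNormSq hξ_meas)
    measurable_const)).1 (hbarrier.mono fun _ h => h.1), hbarrier.mono fun _ h => h.2⟩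

/-- **Regularity barrier for deterministic nonlinear heat equations
(Proposition on nonlinear heat equations).**
Let `H` be a separable ℝ-Hilbert space with orthonormal basis `(b)_{b∈ι}`, realized via
coefficient functions `ι → ℝ`; let `A` be the diagonal operator with eigenvalues `-λ_b`,
`sup_b (-λ_b) < η`, with interpolation spaces `H_r` realized as the weighted ℓ²-spaces
with squared norm `HNormSq η lam r`; the semigroup acts by `(e^{tA} c)_b = e^{-λ_b t} c_b`.
Let `w ∈ H`, `b₀ ∈ ι`, `⟨b₀,w⟩ > 0`, `w = ⟨b₀,w⟩ b₀`, `F(v) = ‖v‖_H w`, let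
`ξ : Ω → H_δ` be measurable, and let `X : [0,T] × Ω → H_δ` be a jointly measurable
process with `X((0,T] × Ω) ⊆ H` such that for every `t ∈ (0,T]` it holds P-a.s. that
`∫_0^t ‖e^{(t-s)A} F(X_s)‖_{H_δ} ds < ∞` and P-a.s. that
`X_t = e^{tA} ξ + ∫_0^t e^{(t-s)A} F(X_s) ds`.
Then for all `t ∈ (0,T]` one has `P(ξ ∈ H_{-1}) = 1` and P-a.s.
`⟨b₀,w⟩ e^{-(λ_{b₀}+|η|)t} (1 - e^{-(inf_b λ_b + η)t}) ‖ξ - ⟨b₀,ξ⟩b₀‖_{H_{-1}}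
  ≤ ⟨b₀, X_t - e^{tA}ξ⟩ ≤ ‖X_t - e^{tA}ξ‖_H < ∞`. -/
theorem nonlinear_heat_regularity_barrier
    {ι : Type*} [Countable ι] [Nonempty ι]
    {Ω : Type*} [MeasurableSpace Ω] (P : Measure Ω) [IsProbabilityMeasure P]
    (T : ℝ) (hT : 0 < T) (η δ : ℝ)
    (lam : ι → ℝ)
    (h_bdd : BddAbove (Set.range fun b => -lam b))
    (h_sup : sSup (Set.range fun b => -lam b) < η)
    (w : ι → ℝ) (b₀ : ι)
    (hw_mem : HNormSq η lam 0 w < ⊤)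
    (hw_pos : 0 < w b₀)
    (hw_supp : ∀ b : ι, b ≠ b₀ → w b = 0)
    (ξ : Ω → ι → ℝ) (hξ_meas : Measurable ξ)
    (hξ_mem : ∀ ω : Ω, HNormSq η lam δ (ξ ω) < ⊤)
    (X : ℝ → Ω → ι → ℝ)
    (hX_meas : Measurable (fun q : Set.Icc (0:ℝ) T × Ω => X (q.1 : ℝ) q.2))
    (hX_mem : ∀ t ∈ Set.Icc (0:ℝ) T, ∀ ω : Ω, HNormSq η lam δ (X t ω) < ⊤)
    (hX_H : ∀ t ∈ Set.Ioc (0:ℝ) T, ∀ ω : Ω, HNormSq η lam 0 (X t ω) < ⊤)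
    (hX_int : ∀ t ∈ Set.Ioc (0:ℝ) T, ∀ᵐ ω ∂P,
      (∫⁻ s in Set.Ioc (0:ℝ) t,
        ENNReal.ofReal (HNorm η lam δ
          (fun b => Real.exp (-lam b * (t - s)) *
            (HNorm η lam 0 (X s ω) * w b)))) < ⊤)
    (hX_eq : ∀ t ∈ Set.Ioc (0:ℝ) T, ∀ᵐ ω ∂P, ∀ b : ι,
      X t ω b = Real.exp (-lam b * t) * ξ ω b +
        ∫ s in Set.Ioc (0:ℝ) t,
          Real.exp (-lam b * (t - s)) * HNorm η lam 0 (X s ω) * w b) :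
    ∀ t ∈ Set.Ioc (0:ℝ) T,
      P {ω | HNormSq η lam (-1) (ξ ω) < ⊤} = 1 ∧
      ∀ᵐ ω ∂P,
        (w b₀ * Real.exp (-(lam b₀ + |η|) * t) *
            (1 - Real.exp (-((⨅ b, lam b) + η) * t)) *
            HNorm η lam (-1) (fun b => if b = b₀ then 0 else ξ ω b) ≤
          X t ω b₀ - Real.exp (-lam b₀ * t) * ξ ω b₀) ∧
        (X t ω b₀ - Real.exp (-lam b₀ * t) * ξ ω b₀ ≤
          HNorm η lam 0 (fun b => X t ω b - Real.exp (-lam b * t) * ξ ω b)) ∧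
        HNormSq η lam 0 (fun b => X t ω b - Real.exp (-lam b * t) * ξ ω b) < ⊤ :=
  nonlinear_heat_regularity_barrier_general P T η δ lam h_bdd h_sup w b₀ hw_pos hw_supp ξ hξ_meas X
    hX_meas hX_H hX_int hX_eq
end
end
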